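/- arXiv:1908.06737 — 7 statements merged into one kernel-verified Lean document; each statement's English description precedes it below -/
import Mathlib

section
/- Variation of parameters for OPUC: if w_n and w'_n are solutions of the transfer matrix equation at spectral parameters z and z' respectively, with the same initial condition, then w'_n = w_n + (z'−z) Σ_{m=0}^{n-1} (1/(2 z^{m+1})) (φ_m†(z) ψ_n(z) − φ_n(z) ψ_m†(z)) w'_m, where (φ_n, φ_n†) and (ψ_n, ψ_n†) are the solutions with initial conditions (1,1) and (1,−1). -/
open Complex Finset

/-- Variation of parameters for OPUC: if w_n and w'_n are solutions of the
transfer matrix equation at spectral parameters z and z' respectively, with the same initial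
condition, then
w'_n = w_n + (z'−z) Σ_{m=0}^{n-1} (1/(2 z^{m+1})) (φ_m†(z) ψ_n(z) − φ_n(z) ψ_m†(z)) w'_m,
where (φ_n, φ_n†) and (ψ_n, ψ_n†) are the solutions with initial conditions (1,1) and (1,−1). -/
theorem stmt_4
    (α : ℕ → ℂ) (hα : ∀ n, ‖α n‖ < 1)
    (z z' : ℂ) (hz : ‖z‖ = 1) (hz' : ‖z'‖ = 1)
    (φ φd ψ ψd w wd w' wd' : ℕ → ℂ)
    -- solutions at parameter z with initial conditions (1,1) and (1,−1)
    (hφ0 : φ 0 = 1) (hφd0 : φd 0 = 1) (hψ0 : ψ 0 = 1) (hψd0 : ψd 0 = -1)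
    (hφ : ∀ n, φ (n + 1) =
      ((Real.sqrt (1 - ‖α n‖ ^ 2) : ℝ) : ℂ)⁻¹ * (z * φ n - (starRingEnd ℂ) (α n) * φd n))
    (hφd : ∀ n, φd (n + 1) =
      ((Real.sqrt (1 - ‖α n‖ ^ 2) : ℝ) : ℂ)⁻¹ * (-(z * α n * φ n) + φd n))
    (hψ : ∀ n, ψ (n + 1) =
      ((Real.sqrt (1 - ‖α n‖ ^ 2) : ℝ) : ℂ)⁻¹ * (z * ψ n - (starRingEnd ℂ) (α n) * ψd n))
    (hψd : ∀ n, ψd (n + 1) =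
      ((Real.sqrt (1 - ‖α n‖ ^ 2) : ℝ) : ℂ)⁻¹ * (-(z * α n * ψ n) + ψd n))
    -- the solution w at parameter z and w' at parameter z', same initial condition
    (hw0 : w 0 = w' 0) (hwd0 : wd 0 = wd' 0)
    (hw : ∀ n, w (n + 1) =
      ((Real.sqrt (1 - ‖α n‖ ^ 2) : ℝ) : ℂ)⁻¹ * (z * w n - (starRingEnd ℂ) (α n) * wd n))
    (hwd : ∀ n, wd (n + 1) =
      ((Real.sqrt (1 - ‖α n‖ ^ 2) : ℝ) : ℂ)⁻¹ * (-(z * α n * w n) + wd n))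
    (hw' : ∀ n, w' (n + 1) =
      ((Real.sqrt (1 - ‖α n‖ ^ 2) : ℝ) : ℂ)⁻¹ * (z' * w' n - (starRingEnd ℂ) (α n) * wd' n))
    (hwd' : ∀ n, wd' (n + 1) =
      ((Real.sqrt (1 - ‖α n‖ ^ 2) : ℝ) : ℂ)⁻¹ * (-(z' * α n * w' n) + wd' n)) :
    ∀ n, w' n = w n + (z' - z) *
      ∑ m ∈ Finset.range n, (1 / (2 * z ^ (m + 1))) * (φd m * ψ n - φ n * ψd m) * w' m := by

  have hz0 : z ≠ 0 := by
    intro h; rw [h] at hz; simp at hz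
  have hrR : ∀ n, (Real.sqrt (1 - ‖α n‖ ^ 2)) * (Real.sqrt (1 - ‖α n‖ ^ 2)) = 1 - ‖α n‖ ^ 2 :=
    fun n => Real.mul_self_sqrt (by nlinarith [hα n, norm_nonneg (α n)])
  have hac : ∀ n, α n * (starRingEnd ℂ) (α n) = ((‖α n‖ ^ 2 : ℝ) : ℂ) := by
    intro n
    rw [Complex.mul_conj, Complex.normSq_eq_norm_sq]
  have haa : ∀ n, ((Real.sqrt (1 - ‖α n‖ ^ 2) : ℝ) : ℂ)⁻¹ *
      ((Real.sqrt (1 - ‖α n‖ ^ 2) : ℝ) : ℂ)⁻¹ * (1 - α n * (starRingEnd ℂ) (α n)) = 1 := by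
    intro n
    have h0 : (0:ℝ) < Real.sqrt (1 - ‖α n‖ ^ 2) :=
      Real.sqrt_pos.2 (by nlinarith [hα n, norm_nonneg (α n)])
    have h1 : ((Real.sqrt (1 - ‖α n‖ ^ 2) : ℝ) : ℂ) ≠ 0 := by
      exact_mod_cast ne_of_gt h0
    have h2 : (1 : ℂ) - ((‖α n‖ ^ 2 : ℝ) : ℂ) =
        ((Real.sqrt (1 - ‖α n‖ ^ 2) : ℝ) : ℂ) * ((Real.sqrt (1 - ‖α n‖ ^ 2) : ℝ) : ℂ) := by
      rw [← Complex.ofReal_mul, hrR n]; push_cast; ring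
    have h3 : ((Real.sqrt (1 - ‖α n‖ ^ 2) : ℝ) : ℂ)⁻¹ * ((Real.sqrt (1 - ‖α n‖ ^ 2) : ℝ) : ℂ) = 1 :=
      inv_mul_cancel₀ h1
    rw [hac n, h2]
    linear_combination (((Real.sqrt (1 - ‖α n‖ ^ 2) : ℝ) : ℂ)⁻¹ * ((Real.sqrt (1 - ‖α n‖ ^ 2) : ℝ) : ℂ) + 1) * h3
  -- Wronskian identity
  have hW : ∀ n, φd n * ψ n - φ n * ψd n = 2 * z ^ n := by
    intro n
    induction n with
    | zero => rw [hφ0, hφd0, hψ0, hψd0]; ring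
    | succ n ih =>
      rw [hφ n, hφd n, hψ n, hψd n]
      linear_combination (z * (φd n * ψ n - φ n * ψd n)) * haa n + z * ih
  suffices h : ∀ n, (w' n = w n + (z' - z) *
      ∑ m ∈ Finset.range n, (1 / (2 * z ^ (m + 1))) * (φd m * ψ n - φ n * ψd m) * w' m) ∧
      (wd' n = wd n + (z' - z) *
      ∑ m ∈ Finset.range n, (1 / (2 * z ^ (m + 1))) * (φd m * ψd n - φd n * ψd m) * w' m) by
    exact fun n => (h n).1
  intro n
  induction n with
  | zero => constructor <;> simp [hw0, hwd0]
  | succ n ih =>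
    obtain ⟨ih1, ih2⟩ := ih
    have hinv : (1 / (2 * z ^ (n + 1))) * (2 * z ^ (n + 1)) = 1 := by
      field_simp
    have hK1 : φd n * ψ (n + 1) - φ (n + 1) * ψd n =
        ((Real.sqrt (1 - ‖α n‖ ^ 2) : ℝ) : ℂ)⁻¹ * (2 * z ^ (n + 1)) := by
      rw [hψ n, hφ n]
      linear_combination (((Real.sqrt (1 - ‖α n‖ ^ 2) : ℝ) : ℂ)⁻¹ * z) * hW n
    have hK2 : φd n * ψd (n + 1) - φd (n + 1) * ψd n =
        ((Real.sqrt (1 - ‖α n‖ ^ 2) : ℝ) : ℂ)⁻¹ * (-(α n) * (2 * z ^ (n + 1))) := by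
      rw [hψd n, hφd n]
      linear_combination (-(((Real.sqrt (1 - ‖α n‖ ^ 2) : ℝ) : ℂ)⁻¹ * z * α n)) * hW n
    have hsum1 : ∑ m ∈ Finset.range n,
        (1 / (2 * z ^ (m + 1))) * (φd m * ψ (n + 1) - φ (n + 1) * ψd m) * w' m =
        ((Real.sqrt (1 - ‖α n‖ ^ 2) : ℝ) : ℂ)⁻¹ *
          (z * ∑ m ∈ Finset.range n, (1 / (2 * z ^ (m + 1))) * (φd m * ψ n - φ n * ψd m) * w' m
          - (starRingEnd ℂ) (α n) *
            ∑ m ∈ Finset.range n, (1 / (2 * z ^ (m + 1))) * (φd m * ψd n - φd n * ψd m) * w' m) := by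
      rw [Finset.mul_sum, Finset.mul_sum, ← Finset.sum_sub_distrib, Finset.mul_sum]
      refine Finset.sum_congr rfl fun m _ => ?_
      rw [hψ n, hφ n]; ring
    have hsum2 : ∑ m ∈ Finset.range n,
        (1 / (2 * z ^ (m + 1))) * (φd m * ψd (n + 1) - φd (n + 1) * ψd m) * w' m =
        ((Real.sqrt (1 - ‖α n‖ ^ 2) : ℝ) : ℂ)⁻¹ *
          (-(z * α n) * ∑ m ∈ Finset.range n, (1 / (2 * z ^ (m + 1))) * (φd m * ψ n - φ n * ψd m) * w' m
          + ∑ m ∈ Finset.range n, (1 / (2 * z ^ (m + 1))) * (φd m * ψd n - φd n * ψd m) * w' m) := by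
      rw [Finset.mul_sum, ← Finset.sum_add_distrib, Finset.mul_sum]
      refine Finset.sum_congr rfl fun m _ => ?_
      rw [hψd n, hφd n]; ring
    constructor
    · rw [hw' n, hw n, Finset.sum_range_succ, hsum1, hK1]
      linear_combination (((Real.sqrt (1 - ‖α n‖ ^ 2) : ℝ) : ℂ)⁻¹ * z) * ih1
        - (((Real.sqrt (1 - ‖α n‖ ^ 2) : ℝ) : ℂ)⁻¹ * (starRingEnd ℂ) (α n)) * ih2
        - ((z' - z) * ((Real.sqrt (1 - ‖α n‖ ^ 2) : ℝ) : ℂ)⁻¹ * w' n) * hinv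
    · rw [hwd' n, hwd n, Finset.sum_range_succ, hsum2, hK2]
      linear_combination (-(((Real.sqrt (1 - ‖α n‖ ^ 2) : ℝ) : ℂ)⁻¹ * z * α n)) * ih1
        + ((Real.sqrt (1 - ‖α n‖ ^ 2) : ℝ) : ℂ)⁻¹ * ih2
        + ((z' - z) * ((Real.sqrt (1 - ‖α n‖ ^ 2) : ℝ) : ℂ)⁻¹ * α n * w' n) * hinv
end

section
/- If z' and z'' are two distinct zeros of the paraorthogonal polynomial H_n^{(β)}(z) = zφ_{n-1}(z) − conj(β)φ*_{n-1}(z), then the vectors (φ_0(z'),…,φ_{n-1}(z')) and (φ_0(z''),…,φ_{n-1}(z'')) are orthogonal in ℂ^n. -/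
open Complex Polynomial MeasureTheory

lemma my_poly_bound (p : Polynomial ℂ) (z : ℂ) (hz : ‖z‖ = 1) :
    ‖p.eval z‖ ≤ ∑ i ∈ Finset.range (p.natDegree + 1), ‖p.coeff i‖ := by
  rw [Polynomial.eval_eq_sum_range]
  refine (norm_sum_le _ _).trans (Finset.sum_le_sum fun i _ => ?_)
  rw [norm_mul, norm_pow, hz, one_pow, mul_one]

lemma my_ae_circle (μ : Measure ℂ) (hcirc : μ {z : ℂ | ‖z‖ = 1}ᶜ = 0) :
    ∀ᵐ z ∂μ, ‖z‖ = 1 := by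
  simpa only [ae_iff, Set.compl_setOf] using hcirc

lemma my_integ (μ : Measure ℂ) [IsProbabilityMeasure μ]
    (hcirc : μ {z : ℂ | ‖z‖ = 1}ᶜ = 0) (p q : Polynomial ℂ) :
    Integrable (fun z => p.eval z * (starRingEnd ℂ) (q.eval z)) μ := by
  refine (integrable_const ((∑ i ∈ Finset.range (p.natDegree + 1), ‖p.coeff i‖) *
    (∑ i ∈ Finset.range (q.natDegree + 1), ‖q.coeff i‖))).mono' ?_ ?_
  · exact (p.continuous.mul (continuous_star.comp q.continuous)).aestronglyMeasurable
  · filter_upwards [my_ae_circle μ hcirc] with z hz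
    rw [norm_mul]
    have h2 : ‖(starRingEnd ℂ) (q.eval z)‖ = ‖q.eval z‖ := norm_star _
    rw [h2]
    exact mul_le_mul (my_poly_bound p z hz) (my_poly_bound q z hz) (norm_nonneg _)
      (Finset.sum_nonneg fun i _ => norm_nonneg _)

lemma my_rev_eval (p : Polynomial ℂ) (z : ℂ) (hz : ‖z‖ = 1) :
    ((p.map (starRingEnd ℂ)).reverse).eval z
      = z ^ p.natDegree * (starRingEnd ℂ) (p.eval z) := by
  have hz1 : z * (starRingEnd ℂ) z = 1 := by
    rw [Complex.mul_conj]
    norm_cast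
    rw [Complex.normSq_eq_norm_sq]
    simp [hz]
  letI : Invertible ((starRingEnd ℂ) z) := ⟨z, hz1, by rwa [mul_comm] at hz1⟩
  have h := Polynomial.eval₂_reverse_mul_pow (RingHom.id ℂ) ((starRingEnd ℂ) z)
    (p.map (starRingEnd ℂ))
  have hinv : (⅟((starRingEnd ℂ) z) : ℂ) = z := rfl
  rw [hinv] at h
  have hd : (p.map (starRingEnd ℂ)).natDegree = p.natDegree :=
    Polynomial.natDegree_map_eq_of_injective (RingHom.injective _) p
  rw [hd] at h
  have h2 : Polynomial.eval₂ (RingHom.id ℂ) ((starRingEnd ℂ) z) (p.map (starRingEnd ℂ))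
      = (starRingEnd ℂ) (p.eval z) := by
    rw [Polynomial.eval₂_map]
    simp only [RingHom.id_comp]
    exact Polynomial.eval₂_at_apply _ z
  rw [h2] at h
  calc ((p.map (starRingEnd ℂ)).reverse).eval z
      = ((p.map (starRingEnd ℂ)).reverse).eval z * (((starRingEnd ℂ) z) * z) ^ p.natDegree := by
        rw [mul_comm ((starRingEnd ℂ) z) z, hz1, one_pow, mul_one]
    _ = (Polynomial.eval₂ (RingHom.id ℂ) z ((p.map (starRingEnd ℂ)).reverse) *
          ((starRingEnd ℂ) z) ^ p.natDegree) * z ^ p.natDegree := by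
        have hre : Polynomial.eval₂ (RingHom.id ℂ) z ((p.map (starRingEnd ℂ)).reverse)
            = ((p.map (starRingEnd ℂ)).reverse).eval z := rfl
        rw [hre, mul_pow]; ring
    _ = (starRingEnd ℂ) (p.eval z) * z ^ p.natDegree := by rw [h]
    _ = z ^ p.natDegree * (starRingEnd ℂ) (p.eval z) := by ring

lemma my_span (φ : ℕ → Polynomial ℂ) (hdeg : ∀ k, (φ k).natDegree = k)
    (hlead : ∀ k, 0 < ((φ k).coeff k).re ∧ ((φ k).coeff k).im = 0) :
    ∀ m (p : Polynomial ℂ), p.natDegree ≤ m →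
      ∃ a : ℕ → ℂ, p = ∑ j ∈ Finset.range (m + 1), Polynomial.C (a j) * φ j := by
  have hlc : ∀ k, (φ k).coeff k ≠ 0 := by
    intro k h
    have := (hlead k).1
    rw [h] at this; simp at this
  intro m
  induction m with
  | zero =>
    intro p hp
    refine ⟨fun _ => p.coeff 0 / (φ 0).coeff 0, ?_⟩
    rw [Finset.sum_range_one]
    have hφ0 : φ 0 = Polynomial.C ((φ 0).coeff 0) :=
      Polynomial.eq_C_of_natDegree_le_zero (le_of_eq (hdeg 0))
    have hCmul : ∀ x : ℂ, Polynomial.C x * φ 0 = Polynomial.C (x * (φ 0).coeff 0) := by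
      intro x
      conv_lhs => rw [hφ0]
      rw [← Polynomial.C_mul]
    show p = Polynomial.C (p.coeff 0 / (φ 0).coeff 0) * φ 0
    rw [hCmul, div_mul_cancel₀ _ (hlc 0)]
    exact Polynomial.eq_C_of_natDegree_le_zero hp
  | succ m ih =>
    intro p hp
    set c := p.coeff (m + 1) / (φ (m + 1)).coeff (m + 1) with hc
    have hq : (p - Polynomial.C c * φ (m + 1)).natDegree ≤ m := by
      rw [Polynomial.natDegree_le_iff_coeff_eq_zero]
      intro N hN
      rw [Polynomial.coeff_sub, Polynomial.coeff_C_mul]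
      rcases eq_or_lt_of_le (Nat.succ_le_of_lt hN) with h | h
      · rw [← h, hc, div_mul_cancel₀ _ (hlc (m + 1)), sub_self]
      · rw [Polynomial.coeff_eq_zero_of_natDegree_lt (lt_of_le_of_lt hp h),
          Polynomial.coeff_eq_zero_of_natDegree_lt (lt_of_le_of_lt (le_of_eq (hdeg (m+1))) h),
          mul_zero, sub_zero]
    obtain ⟨a, ha⟩ := ih _ hq
    refine ⟨fun j => if j = m + 1 then c else a j, ?_⟩
    rw [Finset.sum_range_succ]
    beta_reduce
    rw [if_pos rfl]
    have he : ∑ j ∈ Finset.range (m + 1), Polynomial.C (if j = m + 1 then c else a j) * φ j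
        = ∑ j ∈ Finset.range (m + 1), Polynomial.C (a j) * φ j := by
      refine Finset.sum_congr rfl fun j hj => ?_
      rw [if_neg (by have := Finset.mem_range.1 hj; omega)]
    rw [he, ← ha]; ring

lemma my_combo_inner (μ : Measure ℂ) [IsProbabilityMeasure μ]
    (hcirc : μ {z : ℂ | ‖z‖ = 1}ᶜ = 0)
    (φ : ℕ → Polynomial ℂ)
    (horth : ∀ k m, ∫ z, (φ k).eval z * (starRingEnd ℂ) ((φ m).eval z) ∂μ =
      if k = m then 1 else 0)
    (m k : ℕ) (a : ℕ → ℂ) :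
    ∫ z, (∑ j ∈ Finset.range m, Polynomial.C (a j) * φ j).eval z *
        (starRingEnd ℂ) ((φ k).eval z) ∂μ
      = if k ∈ Finset.range m then a k else 0 := by
  have h1 : (fun z => (∑ j ∈ Finset.range m, Polynomial.C (a j) * φ j).eval z *
      (starRingEnd ℂ) ((φ k).eval z))
      = fun z => ∑ j ∈ Finset.range m,
          a j • ((φ j).eval z * (starRingEnd ℂ) ((φ k).eval z)) := by
    funext z
    rw [Polynomial.eval_finset_sum, Finset.sum_mul]
    exact Finset.sum_congr rfl fun j _ => by rw [Polynomial.eval_mul, Polynomial.eval_C]; simp; ring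
  have hint : ∀ j ∈ Finset.range m,
      Integrable (fun z => a j • ((φ j).eval z * (starRingEnd ℂ) ((φ k).eval z))) μ :=
    fun j _ => (my_integ μ hcirc (φ j) (φ k)).smul (a j)
  rw [h1, integral_finset_sum _ hint]
  simp only [integral_smul]
  simp only [horth, smul_eq_mul, mul_ite, mul_one, mul_zero]
  exact Finset.sum_ite_eq' (Finset.range m) k a

lemma my_inner_combo (μ : Measure ℂ) [IsProbabilityMeasure μ]
    (hcirc : μ {z : ℂ | ‖z‖ = 1}ᶜ = 0)
    (φ : ℕ → Polynomial ℂ)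
    (horth : ∀ k m, ∫ z, (φ k).eval z * (starRingEnd ℂ) ((φ m).eval z) ∂μ =
      if k = m then 1 else 0)
    (m k : ℕ) (b : ℕ → ℂ) :
    ∫ z, (φ k).eval z *
        (starRingEnd ℂ) ((∑ j ∈ Finset.range m, Polynomial.C (b j) * φ j).eval z) ∂μ
      = if k ∈ Finset.range m then (starRingEnd ℂ) (b k) else 0 := by
  have h1 : (fun z => (φ k).eval z *
      (starRingEnd ℂ) ((∑ j ∈ Finset.range m, Polynomial.C (b j) * φ j).eval z))
      = fun z => ∑ j ∈ Finset.range m,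
          ((starRingEnd ℂ) (b j)) • ((φ k).eval z * (starRingEnd ℂ) ((φ j).eval z)) := by
    funext z
    rw [Polynomial.eval_finset_sum, map_sum, Finset.mul_sum]
    exact Finset.sum_congr rfl fun j _ => by
      rw [Polynomial.eval_mul, Polynomial.eval_C, map_mul]; simp; ring
  have hint : ∀ j ∈ Finset.range m,
      Integrable (fun z => ((starRingEnd ℂ) (b j)) • ((φ k).eval z * (starRingEnd ℂ) ((φ j).eval z))) μ :=
    fun j _ => (my_integ μ hcirc (φ k) (φ j)).smul ((starRingEnd ℂ) (b j))
  rw [h1, integral_finset_sum _ hint]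
  simp only [integral_smul]
  simp only [horth, smul_eq_mul, mul_ite, mul_one, mul_zero]
  exact Finset.sum_ite_eq (Finset.range m) k fun j => (starRingEnd ℂ) (b j)

lemma my_combo_combo (μ : Measure ℂ) [IsProbabilityMeasure μ]
    (hcirc : μ {z : ℂ | ‖z‖ = 1}ᶜ = 0)
    (φ : ℕ → Polynomial ℂ)
    (horth : ∀ k m, ∫ z, (φ k).eval z * (starRingEnd ℂ) ((φ m).eval z) ∂μ =
      if k = m then 1 else 0)
    (m : ℕ) (a b : ℕ → ℂ) :
    ∫ z, (∑ j ∈ Finset.range m, Polynomial.C (a j) * φ j).eval z *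
        (starRingEnd ℂ) ((∑ j ∈ Finset.range m, Polynomial.C (b j) * φ j).eval z) ∂μ
      = ∑ j ∈ Finset.range m, a j * (starRingEnd ℂ) (b j) := by
  set Q := ∑ j ∈ Finset.range m, Polynomial.C (b j) * φ j with hQ
  have h1 : (fun z => (∑ j ∈ Finset.range m, Polynomial.C (a j) * φ j).eval z *
      (starRingEnd ℂ) (Q.eval z))
      = fun z => ∑ j ∈ Finset.range m,
          a j • ((φ j).eval z * (starRingEnd ℂ) (Q.eval z)) := by
    funext z
    rw [Polynomial.eval_finset_sum, Finset.sum_mul]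
    exact Finset.sum_congr rfl fun j _ => by rw [Polynomial.eval_mul, Polynomial.eval_C]; simp; ring
  have hint : ∀ j ∈ Finset.range m,
      Integrable (fun z => a j • ((φ j).eval z * (starRingEnd ℂ) (Q.eval z))) μ :=
    fun j _ => (my_integ μ hcirc (φ j) Q).smul (a j)
  rw [h1, integral_finset_sum _ hint]
  simp only [integral_smul]
  simp only [smul_eq_mul]
  refine Finset.sum_congr rfl fun j hj => ?_
  rw [hQ, my_inner_combo μ hcirc φ horth m j b, if_pos hj]

lemma my_unit (z : ℂ) (hz : ‖z‖ = 1) : z * (starRingEnd ℂ) z = 1 := by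
  rw [Complex.mul_conj]
  norm_cast
  rw [Complex.normSq_eq_norm_sq]
  simp [hz]

/-- If z' and z'' are two distinct zeros of the paraorthogonal polynomial
H_n^{(β)}(z) = zφ_{n-1}(z) − conj(β)φ*_{n-1}(z), then the vectors (φ_0(z'),…,φ_{n-1}(z'))
and (φ_0(z''),…,φ_{n-1}(z'')) are orthogonal in ℂ^n. -/
theorem stmt_5
    (μ : Measure ℂ) [IsProbabilityMeasure μ]
    (hcirc : μ {z : ℂ | ‖z‖ = 1}ᶜ = 0)
    (hinf : ∀ s : Finset ℂ, μ ((↑s : Set ℂ)ᶜ) ≠ 0)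
    (φ : ℕ → Polynomial ℂ)
    (hdeg : ∀ k, (φ k).natDegree = k)
    (hlead : ∀ k, 0 < ((φ k).coeff k).re ∧ ((φ k).coeff k).im = 0)
    (horth : ∀ k m, ∫ z, (φ k).eval z * (starRingEnd ℂ) ((φ m).eval z) ∂μ =
      if k = m then 1 else 0)
    (n : ℕ) (hn : 1 ≤ n)
    (β : ℂ) (hβ : ‖β‖ = 1)
    (H : Polynomial ℂ)
    (hH : H = X * φ (n - 1) -
      C ((starRingEnd ℂ) β) * ((φ (n - 1)).map (starRingEnd ℂ)).reverse)
    (z' z'' : ℂ) (hz' : ‖z'‖ = 1) (hz'' : ‖z''‖ = 1) (hne : z' ≠ z'')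
    (hroot' : H.eval z' = 0) (hroot'' : H.eval z'' = 0) :
    ∑ k ∈ Finset.range n, (φ k).eval z' * (starRingEnd ℂ) ((φ k).eval z'') = 0 := by
  obtain ⟨d, rfl⟩ : ∃ d, n = d + 1 := ⟨n - 1, by omega⟩
  simp only [Nat.add_sub_cancel] at hH
  set Q : Polynomial ℂ := ((φ d).map (starRingEnd ℂ)).reverse with hQdef
  have hae : ∀ᵐ z ∂μ, ‖z‖ = 1 := my_ae_circle μ hcirc
  have hQeval : ∀ z : ℂ, ‖z‖ = 1 → Q.eval z = z ^ d * (starRingEnd ℂ) ((φ d).eval z) := by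
    intro z hz
    rw [hQdef]
    rw [my_rev_eval (φ d) z hz, hdeg d]
  have hQdeg : Q.natDegree ≤ d := by
    refine le_trans (Polynomial.reverse_natDegree_le _) ?_
    rw [Polynomial.natDegree_map_eq_of_injective (RingHom.injective _) (φ d), hdeg d]
  -- the modified multiplication images
  set B : Fin (d + 1) → Polynomial ℂ :=
    fun k => if (k : ℕ) = d then Polynomial.C ((starRingEnd ℂ) β) * Q else X * φ (k : ℕ)
    with hBdef
  have hBdeg : ∀ k : Fin (d + 1), (B k).natDegree ≤ d := by
    intro k
    by_cases h : (k : ℕ) = d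
    · rw [hBdef]; simp only [if_pos h]
      exact le_trans (Polynomial.natDegree_C_mul_le _ _) hQdeg
    · rw [hBdef]; simp only [if_neg h]
      refine le_trans (Polynomial.natDegree_mul_le) ?_
      rw [Polynomial.natDegree_X, hdeg]
      have := k.isLt
      omega
  -- root conditions
  have hroots : ∀ z : ℂ, H.eval z = 0 → ∀ k : Fin (d + 1),
      (B k).eval z = z * (φ (k : ℕ)).eval z := by
    intro z hz k
    by_cases h : (k : ℕ) = d
    · rw [hBdef]
      rw [hH] at hz
      simp only [Polynomial.eval_sub, Polynomial.eval_mul, Polynomial.eval_X,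
        Polynomial.eval_C] at hz
      simp only [h, if_true, eq_self_iff_true, ite_true, Polynomial.eval_mul,
        Polynomial.eval_C]
      linear_combination -hz
    · rw [hBdef]; simp only [if_neg h, Polynomial.eval_mul, Polynomial.eval_X]
  -- expansion coefficients
  have hexp : ∀ k : Fin (d + 1), ∃ a : ℕ → ℂ,
      B k = ∑ j ∈ Finset.range (d + 1), Polynomial.C (a j) * φ j :=
    fun k => my_span φ hdeg hlead d (B k) (hBdeg k)
  choose A hA using hexp
  have hBsum : ∀ (k : Fin (d + 1)) (z : ℂ),
      (B k).eval z = ∑ j : Fin (d + 1), A k (j : ℕ) * (φ (j : ℕ)).eval z := by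
    intro k z
    conv_lhs => rw [hA k]
    rw [Polynomial.eval_finset_sum]
    rw [show (∑ j ∈ Finset.range (d + 1), (Polynomial.C (A k j) * φ j).eval z)
        = ∑ j ∈ Finset.range (d + 1), A k j * (φ j).eval z from
      Finset.sum_congr rfl fun j _ => by rw [Polynomial.eval_mul, Polynomial.eval_C]]
    exact (Fin.sum_univ_eq_sum_range (fun j => A k j * (φ j).eval z) (d + 1)).symm
  -- Gram identity
  have hβ1 : β * (starRingEnd ℂ) β = 1 := my_unit β hβ
  have hGram0 : ∀ k k' : Fin (d + 1), (k : ℕ) ≠ d → (k' : ℕ) = d →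
      ∫ z, (B k).eval z * (starRingEnd ℂ) ((B k').eval z) ∂μ = 0 := by
    intro k k' hk hk'
    have hkd : (k : ℕ) < d := by have := k.isLt; omega
    obtain ⟨e, he⟩ : ∃ e, d = e + 1 := ⟨d - 1, by omega⟩
    have hke : (k : ℕ) ≤ e := by omega
    set g : Polynomial ℂ := X ^ (e - (k : ℕ)) * ((φ (k : ℕ)).map (starRingEnd ℂ)).reverse
      with hgdef
    have hgdeg : g.natDegree ≤ e := by
      refine le_trans Polynomial.natDegree_mul_le ?_
      rw [Polynomial.natDegree_X_pow]
      have h2 : (((φ (k : ℕ)).map (starRingEnd ℂ)).reverse).natDegree ≤ (k : ℕ) := by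
        refine le_trans (Polynomial.reverse_natDegree_le _) ?_
        rw [Polynomial.natDegree_map_eq_of_injective (RingHom.injective _), hdeg]
      omega
    have hint : ∀ᵐ z ∂μ, (B k).eval z * (starRingEnd ℂ) ((B k').eval z)
        = β • ((φ d).eval z * (starRingEnd ℂ) (g.eval z)) := by
      filter_upwards [hae] with z hz
      have hz1 := my_unit z hz
      have hrev := my_rev_eval (φ (k : ℕ)) z hz
      rw [hdeg] at hrev
      rw [hBdef]
      simp only [if_neg hk, hk', eq_self_iff_true, ite_true, if_true]
      rw [Polynomial.eval_mul, Polynomial.eval_X, Polynomial.eval_mul, Polynomial.eval_C]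
      rw [hQeval z hz, hgdef]
      rw [Polynomial.eval_mul, Polynomial.eval_pow, Polynomial.eval_X, hrev]
      simp only [map_mul, map_pow, Complex.conj_conj, smul_eq_mul]
      rw [show ((starRingEnd ℂ) z) ^ (e - (k : ℕ)) * (((starRingEnd ℂ) z) ^ (k : ℕ) *
            (φ (k : ℕ)).eval z)
          = ((starRingEnd ℂ) z) ^ e * (φ (k : ℕ)).eval z from by
        rw [← mul_assoc, ← pow_add, Nat.sub_add_cancel hke]]
      have hpd : ((starRingEnd ℂ) z) ^ d = ((starRingEnd ℂ) z) ^ e * (starRingEnd ℂ) z := by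
        rw [he, pow_succ]
      rw [hpd]
      linear_combination (β * ((starRingEnd ℂ) z) ^ e * (φ (k : ℕ)).eval z *
        (φ d).eval z) * hz1
    rw [integral_congr_ae hint, integral_smul]
    obtain ⟨a, hag⟩ := my_span φ hdeg hlead e g hgdeg
    rw [hag, my_inner_combo μ hcirc φ horth (e + 1) d a,
      if_neg (by simp [he]), smul_zero]
  have hGram : ∀ k k' : Fin (d + 1),
      ∫ z, (B k).eval z * (starRingEnd ℂ) ((B k').eval z) ∂μ
        = if k = k' then 1 else 0 := by
    intro k k'
    by_cases hk : (k : ℕ) = d <;> by_cases hk' : (k' : ℕ) = d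
    · have hkk : k = k' := Fin.ext (by rw [hk, hk'])
      rw [if_pos hkk, hkk]
      have hint : ∀ᵐ z ∂μ, (B k').eval z * (starRingEnd ℂ) ((B k').eval z)
          = (φ d).eval z * (starRingEnd ℂ) ((φ d).eval z) := by
        filter_upwards [hae] with z hz
        have hzd : z ^ d * ((starRingEnd ℂ) z) ^ d = 1 := by
          rw [← mul_pow, my_unit z hz, one_pow]
        rw [hBdef]
        simp only [hk', eq_self_iff_true, ite_true, if_true]
        rw [Polynomial.eval_mul, Polynomial.eval_C, hQeval z hz]
        simp only [map_mul, map_pow, Complex.conj_conj]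
        linear_combination ((φ d).eval z * (starRingEnd ℂ) ((φ d).eval z) *
            (β * (starRingEnd ℂ) β)) * hzd
          + ((φ d).eval z * (starRingEnd ℂ) ((φ d).eval z)) * hβ1
      rw [integral_congr_ae hint, horth d d, if_pos rfl]
    · rw [if_neg (show k ≠ k' from fun hkk => hk' (by rw [← hkk, hk]))]
      have h0 := hGram0 k' k hk' hk
      have h1 : ∫ z, (B k).eval z * (starRingEnd ℂ) ((B k').eval z) ∂μ
          = (starRingEnd ℂ) (∫ z, (B k').eval z * (starRingEnd ℂ) ((B k).eval z) ∂μ) := by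
        rw [← integral_conj]
        refine integral_congr_ae (Filter.Eventually.of_forall fun z => ?_)
        simp only [map_mul, Complex.conj_conj]
        ring
      rw [h1, h0, map_zero]
    · rw [if_neg (show k ≠ k' from fun hkk => hk (by rw [hkk, hk']))]
      exact hGram0 k k' hk hk'
    · have hint : ∀ᵐ z ∂μ, (B k).eval z * (starRingEnd ℂ) ((B k').eval z)
          = (φ (k : ℕ)).eval z * (starRingEnd ℂ) ((φ (k' : ℕ)).eval z) := by
        filter_upwards [hae] with z hz
        rw [hBdef]
        simp only [if_neg hk, if_neg hk']
        rw [Polynomial.eval_mul, Polynomial.eval_X, Polynomial.eval_mul, Polynomial.eval_X,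
          map_mul]
        linear_combination ((φ (k : ℕ)).eval z * (starRingEnd ℂ) ((φ (k' : ℕ)).eval z)) *
          my_unit z hz
      rw [integral_congr_ae hint, horth]
      by_cases hkk : k = k'
      · rw [if_pos (by rw [hkk]), if_pos hkk]
      · rw [if_neg (fun h => hkk (Fin.ext h)), if_neg hkk]
  -- column orthonormality
  have hCol : ∀ k k' : Fin (d + 1),
      ∑ j ∈ Finset.range (d + 1), A k j * (starRingEnd ℂ) (A k' j)
        = if k = k' then 1 else 0 := by
    intro k k'
    have h1 := my_combo_combo μ hcirc φ horth (d + 1) (A k) (A k')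
    rw [← hA k, ← hA k'] at h1
    rw [← h1]
    exact hGram k k'
  -- matrix argument
  set M : Matrix (Fin (d + 1)) (Fin (d + 1)) ℂ := Matrix.of fun k j => A k (j : ℕ) with hMdef
  have hMMH : M * M.conjTranspose = 1 := by
    ext k k'
    rw [Matrix.mul_apply, Matrix.one_apply]
    have := hCol k k'
    rw [← Fin.sum_univ_eq_sum_range (fun j => A k j * (starRingEnd ℂ) (A k' j)) (d + 1)] at this
    rw [← this]
    exact Finset.sum_congr rfl fun j _ => by
      rw [hMdef, Matrix.conjTranspose_apply]
      rfl
  have hHMM : M.conjTranspose * M = 1 := mul_eq_one_comm.mp hMMH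
  have hRow : ∀ j j' : Fin (d + 1),
      ∑ k : Fin (d + 1), A k (j : ℕ) * (starRingEnd ℂ) (A k (j' : ℕ))
        = if j = j' then 1 else 0 := by
    intro j j'
    have h0 : ∑ k : Fin (d + 1), (starRingEnd ℂ) (A k (j : ℕ)) * A k (j' : ℕ)
        = if j = j' then 1 else 0 := by
      have h1 := congrFun (congrFun hHMM j) j'
      rw [Matrix.mul_apply, Matrix.one_apply] at h1
      rw [← h1]
      exact Finset.sum_congr rfl fun k _ => by
        rw [hMdef, Matrix.conjTranspose_apply]
        rfl
    calc ∑ k : Fin (d + 1), A k (j : ℕ) * (starRingEnd ℂ) (A k (j' : ℕ))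
        = (starRingEnd ℂ) (∑ k : Fin (d + 1),
            (starRingEnd ℂ) (A k (j : ℕ)) * A k (j' : ℕ)) := by
          rw [map_sum]
          exact Finset.sum_congr rfl fun k _ => by
            rw [map_mul, Complex.conj_conj]
      _ = if j = j' then 1 else 0 := by
          rw [h0]
          split <;> simp
  -- final computation
  rw [← Fin.sum_univ_eq_sum_range
    (fun k => (φ k).eval z' * (starRingEnd ℂ) ((φ k).eval z'')) (d + 1)]
  set S : ℂ := ∑ k : Fin (d + 1), (φ (k : ℕ)).eval z' * (starRingEnd ℂ) ((φ (k : ℕ)).eval z'')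
    with hSdef
  have key : (z' * (starRingEnd ℂ) z'') * S = S := by
    calc (z' * (starRingEnd ℂ) z'') * S
        = ∑ k : Fin (d + 1), (B k).eval z' * (starRingEnd ℂ) ((B k).eval z'') := by
          rw [hSdef, Finset.mul_sum]
          refine Finset.sum_congr rfl fun k _ => ?_
          rw [hroots z' hroot' k, hroots z'' hroot'' k, map_mul]
          ring
      _ = ∑ k : Fin (d + 1), (∑ j : Fin (d + 1), A k (j : ℕ) * (φ (j : ℕ)).eval z') *
            (∑ j : Fin (d + 1), (starRingEnd ℂ) (A k (j : ℕ)) *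
              (starRingEnd ℂ) ((φ (j : ℕ)).eval z'')) := by
          refine Finset.sum_congr rfl fun k _ => ?_
          rw [hBsum k z', hBsum k z'', map_sum]
          congr 1
          exact Finset.sum_congr rfl fun j _ => map_mul _ _ _
      _ = ∑ j : Fin (d + 1), ∑ j' : Fin (d + 1),
            (∑ k : Fin (d + 1), A k (j : ℕ) * (starRingEnd ℂ) (A k (j' : ℕ))) *
              ((φ (j : ℕ)).eval z' * (starRingEnd ℂ) ((φ (j' : ℕ)).eval z'')) := by
          rw [Finset.sum_congr rfl fun k (_ : k ∈ Finset.univ) => Finset.sum_mul_sum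
            Finset.univ Finset.univ _ _]
          rw [Finset.sum_comm]
          refine Finset.sum_congr rfl fun j _ => ?_
          rw [Finset.sum_comm]
          refine Finset.sum_congr rfl fun j' _ => ?_
          rw [Finset.sum_mul]
          exact Finset.sum_congr rfl fun k _ => by ring
      _ = ∑ j : Fin (d + 1), (φ (j : ℕ)).eval z' * (starRingEnd ℂ) ((φ (j : ℕ)).eval z'') := by
          refine Finset.sum_congr rfl fun j _ => ?_
          rw [Finset.sum_congr rfl fun j' (_ : j' ∈ Finset.univ) => by rw [hRow j j']]
          simp [Finset.sum_ite_eq, apply_ite]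
      _ = S := hSdef.symm
  have hzz : z' * (starRingEnd ℂ) z'' ≠ 1 := by
    intro h
    apply hne
    have h2 : (starRingEnd ℂ) z'' * z'' = 1 := by
      rw [mul_comm]; exact my_unit z'' hz''
    calc z' = z' * ((starRingEnd ℂ) z'' * z'') := by rw [h2, mul_one]
      _ = (z' * (starRingEnd ℂ) z'') * z'' := by ring
      _ = z'' := by rw [h, one_mul]
  have : (z' * (starRingEnd ℂ) z'' - 1) * S = 0 := by
    rw [sub_mul, key, one_mul, sub_self]
  rcases mul_eq_zero.mp this with h | h
  · exact absurd (by linear_combination h) hzz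
  · exact h
end

section
/- Each zero z_0 of the paraorthogonal polynomial H_n^{(β)} is simple, and there exists a nonzero constant c with H_n^{(β)}(z) = c (z−z_0) K_n(z, z_0), where K_n is the Christoffel–Darboux kernel. -/
set_option maxHeartbeats 1000000

open Complex Polynomial MeasureTheory ComplexConjugate

set_option linter.unusedSectionVars false

namespace Stmt6Aux

noncomputable def Ii (μ : Measure ℂ) (p q : Polynomial ℂ) : ℂ :=
  ∫ z, p.eval z * conj (q.eval z) ∂μ

variable {μ : Measure ℂ} [IsProbabilityMeasure μ]

lemma ae_circ (hcirc : μ {z : ℂ | ‖z‖ = 1}ᶜ = 0) : ∀ᵐ z ∂μ, ‖z‖ = 1 := by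
  rw [ae_iff]; exact hcirc

lemma eval_bound (p : Polynomial ℂ) {z : ℂ} (hz : ‖z‖ = 1) :
    ‖p.eval z‖ ≤ ∑ i ∈ Finset.range (p.natDegree + 1), ‖p.coeff i‖ := by
  rw [Polynomial.eval_eq_sum_range]
  refine (norm_sum_le _ _).trans ?_
  refine Finset.sum_le_sum fun i _ => ?_
  rw [norm_mul, norm_pow, hz, one_pow, mul_one]

lemma integrable_aux (hcirc : μ {z : ℂ | ‖z‖ = 1}ᶜ = 0) (p q : Polynomial ℂ) :
    Integrable (fun z => p.eval z * conj (q.eval z)) μ := by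
  refine Integrable.mono' (g := fun _ =>
      (∑ i ∈ Finset.range (p.natDegree + 1), ‖p.coeff i‖) *
      (∑ i ∈ Finset.range (q.natDegree + 1), ‖q.coeff i‖)) (integrable_const _) ?_ ?_
  · exact (p.continuous.mul (Complex.continuous_conj.comp q.continuous)).aestronglyMeasurable
  · filter_upwards [ae_circ hcirc] with z hz
    rw [norm_mul]
    have hc : ‖conj (q.eval z)‖ = ‖q.eval z‖ := by simp
    rw [hc]
    exact mul_le_mul (eval_bound p hz) (eval_bound q hz) (norm_nonneg _)
      (Finset.sum_nonneg fun _ _ => norm_nonneg _)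

lemma circ_mul_conj {z : ℂ} (hz : ‖z‖ = 1) : z * conj z = 1 := by
  rw [Complex.mul_conj]
  norm_cast
  rw [Complex.normSq_eq_norm_sq, hz, one_pow]

lemma Ii_C_mul_left (a : ℂ) (p q : Polynomial ℂ) :
    Ii μ (C a * p) q = a * Ii μ p q := by
  unfold Ii
  simp only [eval_mul, eval_C, mul_assoc]
  exact integral_const_mul a _

lemma Ii_C_mul_right (a : ℂ) (p q : Polynomial ℂ) :
    Ii μ p (C a * q) = conj a * Ii μ p q := by
  unfold Ii
  simp only [eval_mul, eval_C, map_mul]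
  rw [← integral_const_mul]
  congr 1; funext z; ring

variable (hcirc : μ {z : ℂ | ‖z‖ = 1}ᶜ = 0)
include hcirc

lemma Ii_sub_left (p₁ p₂ q : Polynomial ℂ) :
    Ii μ (p₁ - p₂) q = Ii μ p₁ q - Ii μ p₂ q := by
  unfold Ii
  simp only [eval_sub, sub_mul]
  exact integral_sub (integrable_aux hcirc p₁ q) (integrable_aux hcirc p₂ q)

lemma Ii_add_left (p₁ p₂ q : Polynomial ℂ) :
    Ii μ (p₁ + p₂) q = Ii μ p₁ q + Ii μ p₂ q := by
  unfold Ii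
  simp only [eval_add, add_mul]
  exact integral_add (integrable_aux hcirc p₁ q) (integrable_aux hcirc p₂ q)

lemma Ii_add_right (p q₁ q₂ : Polynomial ℂ) :
    Ii μ p (q₁ + q₂) = Ii μ p q₁ + Ii μ p q₂ := by
  unfold Ii
  simp only [eval_add, map_add, mul_add]
  exact integral_add (integrable_aux hcirc p q₁) (integrable_aux hcirc p q₂)

lemma Ii_sum_left {ι : Type*} (s : Finset ι) (f : ι → Polynomial ℂ) (q : Polynomial ℂ) :
    Ii μ (∑ k ∈ s, f k) q = ∑ k ∈ s, Ii μ (f k) q := by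
  unfold Ii
  simp only [eval_finset_sum, Finset.sum_mul]
  exact integral_finset_sum s fun k _ => integrable_aux hcirc (f k) q

lemma Ii_sum_right {ι : Type*} (s : Finset ι) (p : Polynomial ℂ) (f : ι → Polynomial ℂ) :
    Ii μ p (∑ k ∈ s, f k) = ∑ k ∈ s, Ii μ p (f k) := by
  unfold Ii
  simp only [eval_finset_sum, map_sum, Finset.mul_sum]
  exact integral_finset_sum s fun k _ => integrable_aux hcirc p (f k)

lemma Ii_X_mul (p q : Polynomial ℂ) : Ii μ (X * p) (X * q) = Ii μ p q := by
  unfold Ii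
  refine integral_congr_ae ?_
  filter_upwards [ae_circ hcirc] with z hz
  have h1 : z * conj z = 1 := circ_mul_conj hz
  simp only [eval_mul, eval_X, map_mul]
  calc z * p.eval z * (conj z * conj (q.eval z))
      = (z * conj z) * (p.eval z * conj (q.eval z)) := by ring
    _ = p.eval z * conj (q.eval z) := by rw [h1, one_mul]

variable (φ : ℕ → Polynomial ℂ)
variable (hdeg : ∀ k, (φ k).natDegree = k)
variable (hlead : ∀ k, 0 < ((φ k).coeff k).re ∧ ((φ k).coeff k).im = 0)
variable (horth : ∀ k m, ∫ z, (φ k).eval z * (starRingEnd ℂ) ((φ m).eval z) ∂μ =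
      if k = m then 1 else 0)

omit hcirc

lemma lead_ne (hlead : ∀ k, 0 < ((φ k).coeff k).re ∧ ((φ k).coeff k).im = 0) (k : ℕ) :
    (φ k).coeff k ≠ 0 := by
  intro h
  have := (hlead k).1
  rw [h] at this
  simp at this

include hdeg hlead in
lemma span_phi : ∀ m (p : Polynomial ℂ), p.natDegree ≤ m →
    ∃ a : ℕ → ℂ, p = ∑ k ∈ Finset.range (m + 1), C (a k) * φ k := by
  intro m
  induction m with
  | zero =>
    intro p hp
    refine ⟨fun _ => p.coeff 0 / (φ 0).coeff 0, ?_⟩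
    have h0 : φ 0 = C ((φ 0).coeff 0) := eq_C_of_natDegree_eq_zero (hdeg 0)
    rw [Finset.sum_range_one]
    nth_rewrite 2 [h0]
    rw [← C_mul, div_mul_cancel₀ _ (lead_ne φ hlead 0)]
    exact eq_C_of_natDegree_le_zero hp
  | succ m ih =>
    intro p hp
    set b := p.coeff (m + 1) / (φ (m + 1)).coeff (m + 1) with hb
    have hr : (p - C b * φ (m + 1)).natDegree ≤ m := by
      rw [natDegree_le_iff_coeff_eq_zero]
      intro N hN
      rw [coeff_sub, coeff_C_mul]
      rcases eq_or_lt_of_le (Nat.succ_le_of_lt hN) with h | h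
      · rw [← h, hb, div_mul_cancel₀ _ (lead_ne φ hlead (m + 1)), sub_self]
      · rw [coeff_eq_zero_of_natDegree_lt (lt_of_le_of_lt hp h),
          coeff_eq_zero_of_natDegree_lt (by rw [hdeg]; exact h), mul_zero, sub_zero]
    obtain ⟨a, ha⟩ := ih _ hr
    refine ⟨fun k => if k = m + 1 then b else a k, ?_⟩
    show p = ∑ k ∈ Finset.range (m + 1 + 1), C (if k = m + 1 then b else a k) * φ k
    rw [Finset.sum_range_succ, if_pos rfl]
    have heq : ∑ k ∈ Finset.range (m + 1), C (if k = m + 1 then b else a k) * φ k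
        = ∑ k ∈ Finset.range (m + 1), C (a k) * φ k := by
      refine Finset.sum_congr rfl fun k hk => ?_
      rw [Finset.mem_range] at hk
      rw [if_neg (by omega)]
    rw [heq, ← ha]
    ring

include horth in
lemma Ii_phi_phi (k m : ℕ) : Ii μ (φ k) (φ m) = if k = m then 1 else 0 := horth k m

include hcirc hdeg hlead horth in
lemma Ii_low_right {p : Polynomial ℂ} {k : ℕ} (h : p.natDegree < k) : Ii μ p (φ k) = 0 := by
  obtain ⟨a, ha⟩ := span_phi φ hdeg hlead p.natDegree p le_rfl
  rw [ha, Ii_sum_left hcirc]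
  refine Finset.sum_eq_zero fun j hj => ?_
  rw [Finset.mem_range] at hj
  rw [Ii_C_mul_left, Ii_phi_phi φ horth, if_neg (by omega), mul_zero]

include hcirc hdeg hlead horth in
lemma Ii_low_left {p : Polynomial ℂ} {k : ℕ} (h : p.natDegree < k) : Ii μ (φ k) p = 0 := by
  obtain ⟨a, ha⟩ := span_phi φ hdeg hlead p.natDegree p le_rfl
  rw [ha, Ii_sum_right hcirc]
  refine Finset.sum_eq_zero fun j hj => ?_
  rw [Finset.mem_range] at hj
  rw [Ii_C_mul_right, Ii_phi_phi φ horth, if_neg (by omega), mul_zero]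

include hcirc hdeg hlead horth in
lemma phi_roots_lt (k : ℕ) (w : ℂ) (hw : (φ k).eval w = 0) : ‖w‖ < 1 := by
  have hφne : φ k ≠ 0 := fun h => lead_ne φ hlead k (by rw [h, coeff_zero])
  rcases Nat.eq_zero_or_pos k with hk | hk
  · exfalso
    apply lead_ne φ hlead k
    subst hk
    rw [eq_C_of_natDegree_eq_zero (hdeg 0), eval_C] at hw
    exact hw
  · obtain ⟨q, hq⟩ : (X - C w) ∣ φ k := dvd_iff_isRoot.mpr hw
    have hqne : q ≠ 0 := by rintro rfl; rw [mul_zero] at hq; exact hφne hq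
    have hdq : q.natDegree < k := by
      have h2 := natDegree_mul (X_sub_C_ne_zero w) hqne
      rw [← hq, hdeg k, natDegree_X_sub_C] at h2
      omega
    have hXq : X * q = φ k + C w * q := by rw [hq]; ring
    have e1 : Ii μ (X * q) (X * q) = Ii μ q q := Ii_X_mul hcirc q q
    have c1 : Ii μ (φ k) (C w * q) = 0 := by
      rw [Ii_C_mul_right, Ii_low_left hcirc φ hdeg hlead horth hdq, mul_zero]
    have c2 : Ii μ (C w * q) (φ k) = 0 := by
      rw [Ii_C_mul_left, Ii_low_right hcirc φ hdeg hlead horth hdq, mul_zero]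
    have c3 : Ii μ (C w * q) (C w * q) = (w * conj w) * Ii μ q q := by
      rw [Ii_C_mul_left, Ii_C_mul_right]; ring
    have e2 : Ii μ (X * q) (X * q) = 1 + (w * conj w) * Ii μ q q := by
      rw [hXq, Ii_add_left hcirc, Ii_add_right hcirc, Ii_add_right hcirc,
        Ii_phi_phi φ horth, if_pos rfl, c1, c2, c3]
      ring
    have e3' : ∫ z, ((Complex.normSq (q.eval z) : ℝ) : ℂ) ∂μ
        = ((∫ z, Complex.normSq (q.eval z) ∂μ : ℝ) : ℂ) := integral_ofReal
    have e3 : Ii μ q q = ((∫ z, Complex.normSq (q.eval z) ∂μ : ℝ) : ℂ) := by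
      rw [← e3']
      refine integral_congr_ae (Filter.Eventually.of_forall fun z => ?_)
      exact Complex.mul_conj _
    set r := ∫ z, Complex.normSq (q.eval z) ∂μ with hrdef
    have hr : 0 ≤ r := integral_nonneg fun z => Complex.normSq_nonneg _
    have key : r = 1 + Complex.normSq w * r := by
      have h4 := e1.symm.trans e2
      rw [e3, Complex.mul_conj] at h4
      exact_mod_cast h4
    have hnsq : Complex.normSq w < 1 := by nlinarith [Complex.normSq_nonneg w]
    have h5 : ‖w‖ ^ 2 < 1 := by rw [Complex.sq_norm]; exact hnsq
    nlinarith [norm_nonneg w]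

omit hcirc hdeg hlead horth

lemma revconj_eval (p : Polynomial ℂ) {z : ℂ} (hz : z ≠ 0) :
    ((p.map (starRingEnd ℂ)).reverse).eval z
      = z ^ p.natDegree * conj (p.eval ((conj z)⁻¹)) := by
  set d := p.natDegree with hd
  have hinj : Function.Injective (starRingEnd ℂ) := (starRingEnd ℂ).injective
  have hmapdeg : (p.map (starRingEnd ℂ)).natDegree = d := natDegree_map_eq_of_injective hinj p
  have h1 : ((p.map (starRingEnd ℂ)).reverse).natDegree < d + 1 :=
    lt_of_le_of_lt (le_of_le_of_eq (reverse_natDegree_le _) hmapdeg) (by omega)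
  rw [eval_eq_sum_range' h1]
  have hL : ∀ i ∈ Finset.range (d + 1),
      ((p.map (starRingEnd ℂ)).reverse).coeff i * z ^ i
        = conj (p.coeff (d - i)) * z ^ i := by
    intro i hi
    rw [Finset.mem_range] at hi
    rw [coeff_reverse, hmapdeg, revAt_le (by omega : i ≤ d), coeff_map]
  rw [Finset.sum_congr rfl hL]
  have hrefl := Finset.sum_range_reflect (fun j => conj (p.coeff j) * z ^ (d - j)) (d + 1)
  simp only [Nat.add_sub_cancel] at hrefl
  have hL2 : ∀ i ∈ Finset.range (d + 1),
      conj (p.coeff (d - i)) * z ^ i = conj (p.coeff (d - i)) * z ^ (d - (d - i)) := by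
    intro i hi
    rw [Finset.mem_range] at hi
    congr 2
    omega
  rw [Finset.sum_congr rfl hL2, hrefl]
  rw [eval_eq_sum_range' (show p.natDegree < d + 1 by omega), map_sum, Finset.mul_sum]
  refine Finset.sum_congr rfl fun i hi => ?_
  rw [Finset.mem_range] at hi
  rw [map_mul, map_pow, map_inv₀, Complex.conj_conj]
  have hzi : z ^ d * (z⁻¹) ^ i = z ^ (d - i) := by
    rw [inv_pow, show d = d - i + i from by omega, pow_add,
      mul_inv_cancel_right₀ (pow_ne_zero i hz)]
    congr 1
    omega
  calc conj (p.coeff i) * z ^ (d - i) = conj (p.coeff i) * (z ^ d * (z⁻¹) ^ i) := by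
        rw [hzi]
    _ = z ^ d * (conj (p.coeff i) * (z⁻¹) ^ i) := by ring

lemma key_ineq (z w : ℂ) :
    ‖1 - conj z * w‖ ^ 2 - ‖z - w‖ ^ 2 = (1 - ‖z‖ ^ 2) * (1 - ‖w‖ ^ 2) := by
  have h : ∀ x : ℂ, ‖x‖ ^ 2 = Complex.normSq x := fun x => by
    rw [Complex.sq_norm]
  simp only [h, Complex.normSq_apply, Complex.sub_re, Complex.sub_im, Complex.mul_re,
    Complex.mul_im, Complex.one_re, Complex.one_im, Complex.conj_re, Complex.conj_im]
  ring

lemma norm_mprod (m : Multiset ℂ) : ‖m.prod‖ = (m.map fun z => ‖z‖).prod := by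
  induction m using Multiset.induction_on with
  | empty => simp
  | cons a s ih => simp [norm_mul, ih]

lemma pow_card_mul_mprod (m : Multiset ℂ) (c : ℝ) (f : ℂ → ℝ) :
    c ^ (Multiset.card m) * (m.map f).prod = (m.map fun a => c * f a).prod := by
  induction m using Multiset.induction_on with
  | empty => simp
  | cons a s ih =>
    simp only [Multiset.map_cons, Multiset.prod_cons, Multiset.card_cons, pow_succ]
    rw [← ih]
    ring

include hcirc hdeg hlead horth in
lemma root_norm_one (n : ℕ) (hn : 1 ≤ n) (β : ℂ) (hβ : ‖β‖ = 1)
    (H : Polynomial ℂ)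
    (hH : H = X * φ (n - 1) -
      C (conj β) * ((φ (n - 1)).map (starRingEnd ℂ)).reverse)
    (z₀ : ℂ) (hroot : H.eval z₀ = 0) : ‖z₀‖ = 1 := by
  set ℓ := n - 1 with hℓ
  have hpne : φ ℓ ≠ 0 := fun h => lead_ne φ hlead ℓ (by rw [h, coeff_zero])
  have hdp : (φ ℓ).natDegree = ℓ := hdeg ℓ
  have hlc : (φ ℓ).leadingCoeff ≠ 0 := by rwa [Ne, leadingCoeff_eq_zero]
  have hsplit : Splits (φ ℓ) := IsAlgClosed.splits _
  have hfac : φ ℓ = C (φ ℓ).leadingCoeff * ((φ ℓ).roots.map fun w => X - C w).prod :=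
    hsplit.eq_prod_roots
  have hcard : Multiset.card (φ ℓ).roots = ℓ := by
    conv_rhs => rw [← hdp]
    exact (splits_iff_card_roots.mp hsplit)
  have hRlt : ∀ w ∈ (φ ℓ).roots, ‖w‖ < 1 := fun w hw =>
    phi_roots_lt hcirc φ hdeg hlead horth ℓ w (mem_roots'.mp hw).2
  have heval : ∀ z : ℂ, ‖(φ ℓ).eval z‖
      = ‖(φ ℓ).leadingCoeff‖ * ((φ ℓ).roots.map fun w => ‖z - w‖).prod := by
    intro z
    conv_lhs => rw [hfac]
    rw [eval_mul, eval_C, norm_mul, eval_multiset_prod, Multiset.map_map, norm_mprod,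
      Multiset.map_map]
    congr 1
    exact congrArg Multiset.prod (Multiset.map_congr rfl fun w _ => by
      simp [Function.comp])
  have heq : z₀ * (φ ℓ).eval z₀
      = conj β * (((φ ℓ).map (starRingEnd ℂ)).reverse).eval z₀ := by
    have h := hroot
    rw [hH] at h
    simp only [eval_sub, eval_mul, eval_X, eval_C] at h
    linear_combination h
  have hβne : β ≠ 0 := fun h => by rw [h] at hβ; simp at hβ
  have hz0 : z₀ ≠ 0 := by
    rintro rfl
    rw [zero_mul] at heq
    have hmapdeg : ((φ ℓ).map (starRingEnd ℂ)).natDegree = ℓ := by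
      rw [natDegree_map_eq_of_injective (starRingEnd ℂ).injective, hdp]
    have h0 : (((φ ℓ).map (starRingEnd ℂ)).reverse).eval 0 = conj ((φ ℓ).leadingCoeff) := by
      rw [← coeff_zero_eq_eval_zero, coeff_reverse, hmapdeg, revAt_le (Nat.zero_le _),
        Nat.sub_zero, coeff_map, Polynomial.leadingCoeff, hdp]
    rw [h0] at heq
    have h1 : conj β ≠ 0 := by simpa using hβne
    have h2 : conj ((φ ℓ).leadingCoeff) ≠ 0 := by simpa using hlc
    exact (mul_ne_zero h1 h2) heq.symm
  set A := ((φ ℓ).roots.map fun w => ‖z₀ - w‖).prod with hA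
  set B := ((φ ℓ).roots.map fun w => ‖1 - conj z₀ * w‖).prod with hB
  have hzc : conj z₀ ≠ 0 := by simpa using hz0
  have hrev : ‖(((φ ℓ).map (starRingEnd ℂ)).reverse).eval z₀‖ = ‖(φ ℓ).leadingCoeff‖ * B := by
    have hfact : ∀ w ∈ (φ ℓ).roots, ‖z₀‖ * ‖(conj z₀)⁻¹ - w‖ = ‖1 - conj z₀ * w‖ := by
      intro w _
      rw [show ‖z₀‖ = ‖conj z₀‖ from by simp, ← norm_mul, mul_sub, mul_inv_cancel₀ hzc]
    calc ‖(((φ ℓ).map (starRingEnd ℂ)).reverse).eval z₀‖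
        = ‖z₀‖ ^ ℓ * ‖(φ ℓ).eval ((conj z₀)⁻¹)‖ := by
          rw [revconj_eval _ hz0, norm_mul, norm_pow, hdp]
          simp
      _ = ‖(φ ℓ).leadingCoeff‖ *
            (‖z₀‖ ^ Multiset.card (φ ℓ).roots *
              ((φ ℓ).roots.map fun w => ‖(conj z₀)⁻¹ - w‖).prod) := by
          rw [heval, hcard]; ring
      _ = ‖(φ ℓ).leadingCoeff‖ * B := by
          rw [pow_card_mul_mprod, hB]
          congr 1
          exact congrArg Multiset.prod (Multiset.map_congr rfl hfact)
  have hAev : ‖(φ ℓ).eval z₀‖ = ‖(φ ℓ).leadingCoeff‖ * A := heval z₀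
  have hmain : ‖z₀‖ * A = B := by
    have h := congrArg norm heq
    rw [norm_mul, norm_mul, hAev, hrev, show ‖conj β‖ = ‖β‖ from by simp, hβ, one_mul] at h
    have hlcpos : 0 < ‖(φ ℓ).leadingCoeff‖ := norm_pos_iff.mpr hlc
    have h2 : ‖(φ ℓ).leadingCoeff‖ * (‖z₀‖ * A) = ‖(φ ℓ).leadingCoeff‖ * B := by
      linear_combination h
    exact mul_left_cancel₀ (ne_of_gt hlcpos) h2
  have hA0 : 0 ≤ A := by
    refine Multiset.prod_nonneg fun x hx => ?_
    obtain ⟨w, hw, rfl⟩ := Multiset.mem_map.mp hx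
    exact norm_nonneg _
  rcases lt_trichotomy ‖z₀‖ 1 with h | h | h
  · exfalso
    have hAB : A ≤ B := by
      refine Multiset.prod_map_le_prod_map₀ _ _ (fun w _ => norm_nonneg _) fun w hw => ?_
      have hk := key_ineq z₀ w
      have hw1 := hRlt w hw
      have hp1 : (0:ℝ) < 1 - ‖z₀‖ ^ 2 := by nlinarith [norm_nonneg z₀]
      have hp2 : (0:ℝ) < 1 - ‖w‖ ^ 2 := by nlinarith [norm_nonneg w]
      have hsq : ‖z₀ - w‖ ^ 2 < ‖1 - conj z₀ * w‖ ^ 2 := by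
        nlinarith [mul_pos hp1 hp2]
      exact le_of_lt (lt_of_pow_lt_pow_left₀ 2 (norm_nonneg _) hsq)
    have hBpos : 0 < B := by
      refine Multiset.prod_pos fun x hx => ?_
      obtain ⟨w, hw, rfl⟩ := Multiset.mem_map.mp hx
      have hk := key_ineq z₀ w
      have hw1 := hRlt w hw
      have hp1 : (0:ℝ) < 1 - ‖z₀‖ ^ 2 := by nlinarith [norm_nonneg z₀]
      have hp2 : (0:ℝ) < 1 - ‖w‖ ^ 2 := by nlinarith [norm_nonneg w]
      have hp : (0:ℝ) < ‖1 - conj z₀ * w‖ ^ 2 := by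
        nlinarith [mul_pos hp1 hp2, norm_nonneg (z₀ - w), sq_nonneg ‖z₀ - w‖]
      nlinarith [hp, norm_nonneg (1 - conj z₀ * w)]
    nlinarith [mul_nonneg (norm_nonneg z₀) (sub_nonneg.mpr hAB)]
  · exact h
  · exfalso
    have hBA : B ≤ A := by
      refine Multiset.prod_map_le_prod_map₀ _ _ (fun w _ => norm_nonneg _) fun w hw => ?_
      have hk := key_ineq z₀ w
      have hw1 := hRlt w hw
      have hp1 : (0:ℝ) < ‖z₀‖ ^ 2 - 1 := by
        have := one_lt_pow₀ h (two_ne_zero)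
        linarith
      have hp2 : (0:ℝ) < 1 - ‖w‖ ^ 2 := by nlinarith [norm_nonneg w]
      have hsq : ‖1 - conj z₀ * w‖ ^ 2 ≤ ‖z₀ - w‖ ^ 2 := by
        nlinarith [mul_pos hp1 hp2]
      exact le_of_pow_le_pow_left₀ (by norm_num) (norm_nonneg _) hsq
    have hApos : 0 < A := by
      refine Multiset.prod_pos fun x hx => ?_
      obtain ⟨w, hw, rfl⟩ := Multiset.mem_map.mp hx
      have hw1 := hRlt w hw
      have h2 := norm_sub_norm_le z₀ w
      linarith
    nlinarith

end Stmt6Aux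

open Stmt6Aux in
/-- Each zero z_0 of the paraorthogonal polynomial H_n^{(β)} is simple, and
there exists a nonzero constant c with H_n^{(β)}(z) = c (z−z_0) K_n(z, z_0), where K_n is
the Christoffel–Darboux kernel. -/
theorem stmt_6
    (μ : Measure ℂ) [IsProbabilityMeasure μ]
    (hcirc : μ {z : ℂ | ‖z‖ = 1}ᶜ = 0)
    (hinf : ∀ s : Finset ℂ, μ ((↑s : Set ℂ)ᶜ) ≠ 0)
    (φ : ℕ → Polynomial ℂ)
    (hdeg : ∀ k, (φ k).natDegree = k)
    (hlead : ∀ k, 0 < ((φ k).coeff k).re ∧ ((φ k).coeff k).im = 0)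
    (horth : ∀ k m, ∫ z, (φ k).eval z * (starRingEnd ℂ) ((φ m).eval z) ∂μ =
      if k = m then 1 else 0)
    (n : ℕ) (hn : 1 ≤ n)
    (β : ℂ) (hβ : ‖β‖ = 1)
    (H : Polynomial ℂ)
    (hH : H = X * φ (n - 1) -
      C ((starRingEnd ℂ) β) * ((φ (n - 1)).map (starRingEnd ℂ)).reverse)
    (z₀ : ℂ) (hroot : H.eval z₀ = 0) :
    Polynomial.rootMultiplicity z₀ H = 1 ∧
    ∃ c : ℂ, c ≠ 0 ∧
      H = C c * ((X - C z₀) *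
        ∑ k ∈ Finset.range n, C ((starRingEnd ℂ) ((φ k).eval z₀)) * φ k) := by
  classical
  set ℓ := n - 1 with hℓdef
  have hnℓ : n = ℓ + 1 := by omega
  have hz₁ : ‖z₀‖ = 1 :=
    root_norm_one hcirc φ hdeg hlead horth n hn β hβ H hH z₀ hroot
  have hz₀ne : z₀ ≠ 0 := by intro h; rw [h] at hz₁; simp at hz₁
  have hz₀c : z₀ * conj z₀ = 1 := circ_mul_conj hz₁
  have hdp : (φ ℓ).natDegree = ℓ := hdeg ℓ
  have hκ : (φ ℓ).coeff ℓ ≠ 0 := lead_ne φ hlead ℓ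
  have hmapdeg : ((φ ℓ).map (starRingEnd ℂ)).natDegree = ℓ := by
    rw [natDegree_map_eq_of_injective (starRingEnd ℂ).injective, hdp]
  -- orthogonality of H against X^j for 1 ≤ j ≤ ℓ
  have horthH : ∀ j, 1 ≤ j → j ≤ ℓ → Ii μ H (X ^ j) = 0 := by
    intro j hj1 hj2
    have hXj : (X : Polynomial ℂ) ^ j = X * X ^ (j - 1) := by
      rw [← pow_succ']
      congr 1
      omega
    have t1 : Ii μ (X * φ ℓ) (X ^ j) = 0 := by
      rw [hXj, Ii_X_mul hcirc]
      exact Ii_low_left hcirc φ hdeg hlead horth (by rw [natDegree_X_pow]; omega)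
    have t2 : Ii μ (((φ ℓ).map (starRingEnd ℂ)).reverse) (X ^ j) = 0 := by
      have ht : Ii μ (((φ ℓ).map (starRingEnd ℂ)).reverse) (X ^ j)
          = conj (Ii μ (φ ℓ) (X ^ (ℓ - j))) := by
        unfold Ii
        rw [← integral_conj]
        refine integral_congr_ae ?_
        filter_upwards [ae_circ hcirc] with z hz
        have hzne : z ≠ 0 := by intro h; rw [h] at hz; simp at hz
        have hzc : z * conj z = 1 := circ_mul_conj hz
        have hcinv : (conj z)⁻¹ = z :=
          inv_eq_of_mul_eq_one_right (by linear_combination hzc)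
        have hp : z ^ ℓ * (conj z) ^ j = z ^ (ℓ - j) := by
          have h1 : z ^ ℓ = z ^ (ℓ - j) * z ^ j := by rw [← pow_add]; congr 1; omega
          rw [h1, mul_assoc, ← mul_pow, hzc, one_pow, mul_one]
        simp only [eval_pow, eval_X, map_mul, map_pow, Complex.conj_conj]
        rw [revconj_eval _ hzne, hdp, hcinv]
        linear_combination conj ((φ ℓ).eval z) * hp
      rw [ht, Ii_low_left hcirc φ hdeg hlead horth (by rw [natDegree_X_pow]; omega), map_zero]
    rw [hH, Ii_sub_left hcirc, Ii_C_mul_left, t1, t2, mul_zero, sub_zero]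
  -- factor H
  obtain ⟨Q, hQ⟩ : (X - C z₀) ∣ H := dvd_iff_isRoot.mpr hroot
  have hHcoeff : H.coeff n = (φ ℓ).coeff ℓ := by
    rw [hH, coeff_sub, coeff_C_mul]
    have h1 : (X * φ ℓ).coeff n = (φ ℓ).coeff ℓ := by rw [hnℓ, coeff_X_mul]
    have h2 : (((φ ℓ).map (starRingEnd ℂ)).reverse).coeff n = 0 := by
      apply coeff_eq_zero_of_natDegree_lt
      calc (((φ ℓ).map (starRingEnd ℂ)).reverse).natDegree ≤ ℓ :=
            le_of_le_of_eq (reverse_natDegree_le _) hmapdeg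
        _ < n := by omega
    rw [h1, h2, mul_zero, sub_zero]
  have hHne : H ≠ 0 := by
    intro h
    rw [h, coeff_zero] at hHcoeff
    exact hκ hHcoeff.symm
  have hQne : Q ≠ 0 := by rintro rfl; rw [mul_zero] at hQ; exact hHne hQ
  have hHdeg : H.natDegree ≤ n := by
    rw [hH]
    refine le_trans (natDegree_sub_le _ _) (max_le ?_ ?_)
    · refine le_trans natDegree_mul_le ?_
      rw [natDegree_X, hdp]
      omega
    · refine le_trans natDegree_mul_le ?_
      rw [natDegree_C]
      have := le_of_le_of_eq (reverse_natDegree_le ((φ ℓ).map (starRingEnd ℂ))) hmapdeg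
      omega
  have hQdeg : Q.natDegree ≤ ℓ := by
    have h2 : H.natDegree = 1 + Q.natDegree := by
      rw [hQ, natDegree_mul (X_sub_C_ne_zero z₀) hQne, natDegree_X_sub_C]
    omega
  -- the recurrence for moments of Q
  have hrec : ∀ j, 1 ≤ j → j ≤ ℓ → Ii μ Q (X ^ (j - 1)) = z₀ * Ii μ Q (X ^ j) := by
    intro j hj1 hj2
    have h0 := horthH j hj1 hj2
    rw [hQ] at h0
    have hx : (X - C z₀) * Q = X * Q - C z₀ * Q := by ring
    rw [hx, Ii_sub_left hcirc, Ii_C_mul_left] at h0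
    have hXj : (X : Polynomial ℂ) ^ j = X * X ^ (j - 1) := by
      rw [← pow_succ']
      congr 1
      omega
    have h1 : Ii μ (X * Q) (X ^ j) = Ii μ Q (X ^ (j - 1)) := by
      rw [hXj, Ii_X_mul hcirc]
    rw [h1] at h0
    linear_combination h0
  have hpow : ∀ t i, i + t = ℓ → Ii μ Q (X ^ i) = z₀ ^ t * Ii μ Q (X ^ ℓ) := by
    intro t
    induction t with
    | zero =>
      intro i hi
      have hiℓ : i = ℓ := by omega
      subst hiℓ
      rw [pow_zero, one_mul]
    | succ t ih =>
      intro i hi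
      have h1 := hrec (i + 1) (by omega) (by omega)
      simp only [Nat.add_sub_cancel] at h1
      rw [h1, ih (i + 1) (by omega)]
      ring
  -- expansion of Q in the φ basis
  obtain ⟨a, ha⟩ := span_phi φ hdeg hlead ℓ Q hQdeg
  rw [show ℓ + 1 = n from by omega] at ha
  have hak : ∀ k ∈ Finset.range n,
      a k = (Ii μ Q (X ^ ℓ) * z₀ ^ ℓ) * conj ((φ k).eval z₀) := by
    intro k hk
    rw [Finset.mem_range] at hk
    have e1 : Ii μ Q (φ k) = a k := by
      rw [ha, Ii_sum_left hcirc]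
      have hterm : ∀ j ∈ Finset.range n,
          Ii μ (C (a j) * φ j) (φ k) = if j = k then a j else 0 := by
        intro j _
        rw [Ii_C_mul_left, Ii_phi_phi φ horth]
        split <;> simp
      rw [Finset.sum_congr rfl hterm, Finset.sum_ite_eq' (Finset.range n) k a,
        if_pos (Finset.mem_range.mpr hk)]
    have e2 : Ii μ Q (φ k) = (Ii μ Q (X ^ ℓ) * z₀ ^ ℓ) * conj ((φ k).eval z₀) := by
      have hφk : φ k = ∑ j ∈ Finset.range (k + 1), C ((φ k).coeff j) * X ^ j := by
        conv_lhs => rw [(φ k).as_sum_range' (k + 1) (by rw [hdeg k]; omega)]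
        exact Finset.sum_congr rfl fun j _ => (C_mul_X_pow_eq_monomial).symm
      calc Ii μ Q (φ k)
          = ∑ j ∈ Finset.range (k + 1), conj ((φ k).coeff j) * Ii μ Q (X ^ j) := by
            conv_lhs => rw [hφk]
            rw [Ii_sum_right hcirc]
            exact Finset.sum_congr rfl fun j _ => Ii_C_mul_right _ _ _
        _ = ∑ j ∈ Finset.range (k + 1),
              conj ((φ k).coeff j) * (z₀ ^ (ℓ - j) * Ii μ Q (X ^ ℓ)) := by
            refine Finset.sum_congr rfl fun j hj => ?_
            rw [Finset.mem_range] at hj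
            rw [hpow (ℓ - j) j (by omega)]
        _ = (Ii μ Q (X ^ ℓ) * z₀ ^ ℓ) * conj ((φ k).eval z₀) := by
            rw [eval_eq_sum_range' (show (φ k).natDegree < k + 1 by rw [hdeg k]; omega),
              map_sum, Finset.mul_sum]
            refine Finset.sum_congr rfl fun j hj => ?_
            rw [Finset.mem_range] at hj
            rw [map_mul, map_pow]
            have h1 : z₀ ^ ℓ = z₀ ^ (ℓ - j) * z₀ ^ j := by rw [← pow_add]; congr 1; omega
            have h2 : z₀ ^ (ℓ - j) = z₀ ^ ℓ * (conj z₀) ^ j := by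
              rw [h1, mul_assoc, ← mul_pow, hz₀c, one_pow, mul_one]
            rw [h2]
            ring
    rw [← e1, e2]
  set c : ℂ := Ii μ Q (X ^ ℓ) * z₀ ^ ℓ with hcdef
  have hQc : Q = C c * (∑ k ∈ Finset.range n, C (conj ((φ k).eval z₀)) * φ k) := by
    rw [ha, Finset.mul_sum]
    refine Finset.sum_congr rfl fun k hk => ?_
    rw [hak k hk, C_mul, mul_assoc]
  have hfact : H = C c * ((X - C z₀) *
      ∑ k ∈ Finset.range n, C (conj ((φ k).eval z₀)) * φ k) := by
    rw [hQ, hQc]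
    ring
  have hcne : c ≠ 0 := by
    intro h
    rw [h, map_zero, zero_mul] at hfact
    exact hHne hfact
  have hKev : (∑ k ∈ Finset.range n, C (conj ((φ k).eval z₀)) * φ k).eval z₀ ≠ 0 := by
    have h1 : (∑ k ∈ Finset.range n, C (conj ((φ k).eval z₀)) * φ k).eval z₀
        = ((∑ k ∈ Finset.range n, Complex.normSq ((φ k).eval z₀) : ℝ) : ℂ) := by
      rw [eval_finset_sum]
      push_cast
      refine Finset.sum_congr rfl fun k _ => ?_
      rw [eval_mul, eval_C, mul_comm, Complex.mul_conj]
    rw [h1, Ne, Complex.ofReal_eq_zero]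
    have hpos : 0 < ∑ k ∈ Finset.range n, Complex.normSq ((φ k).eval z₀) := by
      refine Finset.sum_pos' (fun k _ => Complex.normSq_nonneg _)
        ⟨0, Finset.mem_range.mpr (by omega), ?_⟩
      refine Complex.normSq_pos.mpr ?_
      rw [eq_C_of_natDegree_eq_zero (hdeg 0), eval_C]
      exact lead_ne φ hlead 0
    exact ne_of_gt hpos
  refine ⟨?_, c, hcne, hfact⟩
  have hne2 : (X - C z₀) *
      (∑ k ∈ Finset.range n, C (conj ((φ k).eval z₀)) * φ k) ≠ 0 := by
    intro h
    rw [h, mul_zero] at hfact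
    exact hHne hfact
  rw [hfact, rootMultiplicity_mul (by rw [← hfact]; exact hHne),
    rootMultiplicity_mul hne2,
    rootMultiplicity_eq_zero (by simp [Polynomial.IsRoot, hcne] : ¬(C c).IsRoot z₀),
    rootMultiplicity_X_sub_C_self,
    rootMultiplicity_eq_zero hKev]
end

section
/- The operator A_n(z): ℂ^n → ℂ^n defined by (A_n(z)v)_k = Σ_{m=0}^{k-1} (1/(2z^{m+1}))(φ_m†(z)ψ_k(z) − φ_k(z)ψ_m†(z)) v_m satisfies ‖A_n(z)‖_{HS}² ≤ (1/4)(‖φ_·(z)‖_n² + ‖φ_·†(z)‖_n²)(‖ψ_·(z)‖_n² + ‖ψ_·†(z)‖_n²), where ‖φ_·(z)‖_n² = Σ_{k=0}^{n-1}|φ_k(z)|² etc. -/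
open Complex Finset

/-- The operator A_n(z): ℂ^n → ℂ^n defined by
(A_n(z)v)_k = Σ_{m=0}^{k-1} (1/(2z^{m+1}))(φ_m†(z)ψ_k(z) − φ_k(z)ψ_m†(z)) v_m satisfies
‖A_n(z)‖_{HS}² ≤ (1/4)(‖φ_·(z)‖_n² + ‖φ_·†(z)‖_n²)(‖ψ_·(z)‖_n² + ‖ψ_·†(z)‖_n²). -/
theorem stmt_8
    (α : ℕ → ℂ) (hα : ∀ k, ‖α k‖ < 1)
    (z : ℂ) (hz : ‖z‖ = 1)
    (φ φd ψ ψd : ℕ → ℂ)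
    (hφ0 : φ 0 = 1) (hφd0 : φd 0 = 1) (hψ0 : ψ 0 = 1) (hψd0 : ψd 0 = -1)
    (hφ : ∀ k, φ (k + 1) =
      ((Real.sqrt (1 - ‖α k‖ ^ 2) : ℝ) : ℂ)⁻¹ * (z * φ k - (starRingEnd ℂ) (α k) * φd k))
    (hφd : ∀ k, φd (k + 1) =
      ((Real.sqrt (1 - ‖α k‖ ^ 2) : ℝ) : ℂ)⁻¹ * (-(z * α k * φ k) + φd k))
    (hψ : ∀ k, ψ (k + 1) =
      ((Real.sqrt (1 - ‖α k‖ ^ 2) : ℝ) : ℂ)⁻¹ * (z * ψ k - (starRingEnd ℂ) (α k) * ψd k))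
    (hψd : ∀ k, ψd (k + 1) =
      ((Real.sqrt (1 - ‖α k‖ ^ 2) : ℝ) : ℂ)⁻¹ * (-(z * α k * ψ k) + ψd k))
    (n : ℕ)
    (A : Matrix (Fin n) (Fin n) ℂ)
    (hA : ∀ k m : Fin n, A k m =
      if (m : ℕ) < (k : ℕ) then
        (1 / (2 * z ^ ((m : ℕ) + 1))) * (φd m * ψ k - φ k * ψd m)
      else 0) :
    ∑ k : Fin n, ∑ m : Fin n, ‖A k m‖ ^ 2 ≤
      (1 / 4) *
        ((∑ k ∈ Finset.range n, ‖φ k‖ ^ 2) + (∑ k ∈ Finset.range n, ‖φd k‖ ^ 2)) *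
        ((∑ k ∈ Finset.range n, ‖ψ k‖ ^ 2) + (∑ k ∈ Finset.range n, ‖ψd k‖ ^ 2)) := by
  have key : ∀ k m : Fin n, ‖A k m‖ ^ 2 ≤
      (1/4) * (‖φd (m:ℕ)‖ * ‖ψ (k:ℕ)‖ + ‖φ (k:ℕ)‖ * ‖ψd (m:ℕ)‖) ^ 2 := by
    intro k m
    rw [hA]
    split_ifs with h
    · have hz2 : ‖(1 / (2 * z ^ ((m:ℕ) + 1)) : ℂ)‖ = 1/2 := by
        simp [norm_div, norm_mul, norm_pow, hz]
      rw [norm_mul, hz2]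
      have h1 : ‖φd (m:ℕ) * ψ (k:ℕ) - φ (k:ℕ) * ψd (m:ℕ)‖ ≤
          ‖φd (m:ℕ)‖ * ‖ψ (k:ℕ)‖ + ‖φ (k:ℕ)‖ * ‖ψd (m:ℕ)‖ := by
        calc ‖φd (m:ℕ) * ψ (k:ℕ) - φ (k:ℕ) * ψd (m:ℕ)‖
            ≤ ‖φd (m:ℕ) * ψ (k:ℕ)‖ + ‖φ (k:ℕ) * ψd (m:ℕ)‖ := norm_sub_le _ _
          _ = ‖φd (m:ℕ)‖ * ‖ψ (k:ℕ)‖ + ‖φ (k:ℕ)‖ * ‖ψd (m:ℕ)‖ := by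
              rw [norm_mul, norm_mul]
      nlinarith [norm_nonneg (φd (m:ℕ) * ψ (k:ℕ) - φ (k:ℕ) * ψd (m:ℕ))]
    · rw [norm_zero]
      have h0 : (0:ℝ) ^ 2 = 0 := by norm_num
      rw [h0]
      positivity
  have step1 : ∑ k : Fin n, ∑ m : Fin n, ‖A k m‖ ^ 2 ≤
      (1/4) * ∑ k ∈ Finset.range n, ∑ m ∈ Finset.range n,
        (‖φd m‖ * ‖ψ k‖ + ‖φ k‖ * ‖ψd m‖) ^ 2 := by
    rw [Finset.mul_sum]
    rw [← Fin.sum_univ_eq_sum_range (fun k => (1/4 : ℝ) * ∑ m ∈ Finset.range n,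
      (‖φd m‖ * ‖ψ k‖ + ‖φ k‖ * ‖ψd m‖) ^ 2)]
    refine Finset.sum_le_sum fun k _ => ?_
    rw [Finset.mul_sum]
    rw [← Fin.sum_univ_eq_sum_range (fun m => (1/4 : ℝ) *
      (‖φd m‖ * ‖ψ (k:ℕ)‖ + ‖φ (k:ℕ)‖ * ‖ψd m‖) ^ 2)]
    exact Finset.sum_le_sum fun m _ => key k m
  set P := ∑ k ∈ Finset.range n, ‖φ k‖ ^ 2 with hP
  set Pd := ∑ k ∈ Finset.range n, ‖φd k‖ ^ 2 with hPd
  set Q := ∑ k ∈ Finset.range n, ‖ψ k‖ ^ 2 with hQ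
  set Qd := ∑ k ∈ Finset.range n, ‖ψd k‖ ^ 2 with hQd
  set S := ∑ k ∈ Finset.range n, ‖φd k‖ * ‖ψd k‖ with hS
  set T := ∑ k ∈ Finset.range n, ‖φ k‖ * ‖ψ k‖ with hT
  have expand : ∑ k ∈ Finset.range n, ∑ m ∈ Finset.range n,
      (‖φd m‖ * ‖ψ k‖ + ‖φ k‖ * ‖ψd m‖) ^ 2 = Pd * Q + 2 * (S * T) + P * Qd := by
    have : ∀ k ∈ Finset.range n, ∑ m ∈ Finset.range n,
        (‖φd m‖ * ‖ψ k‖ + ‖φ k‖ * ‖ψd m‖) ^ 2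
        = Pd * ‖ψ k‖ ^ 2 + 2 * (S * (‖φ k‖ * ‖ψ k‖)) + ‖φ k‖ ^ 2 * Qd := by
      intro k _
      rw [hPd, hS, hQd, Finset.sum_mul, Finset.sum_mul, Finset.mul_sum, Finset.mul_sum,
        ← Finset.sum_add_distrib, ← Finset.sum_add_distrib]
      exact Finset.sum_congr rfl fun m _ => by ring
    rw [Finset.sum_congr rfl this, Finset.sum_add_distrib, Finset.sum_add_distrib]
    simp only [← Finset.mul_sum, ← Finset.sum_mul]
    rfl
  have cs1 : S ^ 2 ≤ Pd * Qd := Finset.sum_mul_sq_le_sq_mul_sq _ _ _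
  have cs2 : T ^ 2 ≤ P * Q := Finset.sum_mul_sq_le_sq_mul_sq _ _ _
  calc ∑ k : Fin n, ∑ m : Fin n, ‖A k m‖ ^ 2
      ≤ (1/4) * (Pd * Q + 2 * (S * T) + P * Qd) := by rw [← expand]; exact step1
    _ ≤ (1/4) * (P + Pd) * (Q + Qd) := by nlinarith [sq_nonneg (S - T)]
end

section
/- Sine kernel asymptotics for the Lebesgue measure: with z_n = e^{i(θ + 2πa/n)}, w_n = e^{i(θ + 2πb/n)}, the Christoffel–Darboux kernel K_n^L(z,w) = Σ_{k=0}^{n-1} z^k conj(w)^k of the normalized Lebesgue measure on ∂D satisfies K_n^L(z_n, w_n)/K_n^L(e^{iθ}, e^{iθ}) → e^{iπ(a−conj(b))} sin(π(a−conj(b)))/(π(a−conj(b))) as n → ∞, for any fixed a, b ∈ ℂ with a ≠ conj(b). -/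
open Complex Filter

/-- Sine kernel asymptotics for the Lebesgue measure: with
z_n = e^{i(θ + 2πa/n)}, w_n = e^{i(θ + 2πb/n)}, the CD kernel
K_n^L(z,w) = Σ_{k=0}^{n-1} z^k conj(w)^k of the normalized Lebesgue measure on ∂D satisfies
K_n^L(z_n, w_n)/K_n^L(e^{iθ}, e^{iθ}) → e^{iπ(a−conj b)} sin(π(a−conj b))/(π(a−conj b))
as n → ∞, for any fixed a, b ∈ ℂ with a ≠ conj(b). -/
theorem stmt_11
    (θ : ℝ) (a b : ℂ) (hab : a ≠ (starRingEnd ℂ) b) :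
    Tendsto
      (fun n : ℕ =>
        (∑ k ∈ Finset.range n,
          (Complex.exp (Complex.I * (θ + 2 * Real.pi * a / n))) ^ k *
            ((starRingEnd ℂ) (Complex.exp (Complex.I * (θ + 2 * Real.pi * b / n)))) ^ k)
          / (n : ℂ))
      atTop
      (nhds (Complex.exp (Complex.I * Real.pi * (a - (starRingEnd ℂ) b)) *
        Complex.sin (Real.pi * (a - (starRingEnd ℂ) b)) /
          (Real.pi * (a - (starRingEnd ℂ) b)))) := by
  set c : ℂ := a - (starRingEnd ℂ) b with hcdef
  have hc0 : c ≠ 0 := sub_ne_zero.mpr hab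
  have hπ : (Real.pi : ℂ) ≠ 0 := by exact_mod_cast Real.pi_ne_zero
  have hI : Complex.I ≠ 0 := Complex.I_ne_zero
  have hK : (2 : ℂ) * Real.pi * Complex.I * c ≠ 0 := by
    simp [hπ, hI, hc0]
  -- value identity
  have hval : Complex.exp (Complex.I * Real.pi * c) * Complex.sin (Real.pi * c) /
      (Real.pi * c)
      = (Complex.exp (2 * Real.pi * Complex.I * c) - 1) / (2 * Real.pi * Complex.I * c) := by
    have hπc : (Real.pi : ℂ) * c ≠ 0 := mul_ne_zero hπ hc0
    rw [div_eq_div_iff hπc hK, Complex.sin]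
    have e1 : Complex.exp (Complex.I * Real.pi * c) *
        Complex.exp (-((Real.pi : ℂ) * c) * Complex.I) = 1 := by
      rw [← Complex.exp_add]
      rw [show Complex.I * Real.pi * c + -((Real.pi : ℂ) * c) * Complex.I = 0 by ring]
      exact Complex.exp_zero
    have e2 : Complex.exp (Complex.I * Real.pi * c) *
        Complex.exp (((Real.pi : ℂ) * c) * Complex.I)
        = Complex.exp (2 * Real.pi * Complex.I * c) := by
      rw [← Complex.exp_add]
      ring_nf
    have hI2 : Complex.I * Complex.I = -1 := Complex.I_mul_I
    linear_combination ((Real.pi : ℂ) * c * Complex.I * Complex.I) * e1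
      - ((Real.pi : ℂ) * c * Complex.I * Complex.I) * e2
      + ((Real.pi : ℂ) * c * (1 - Complex.exp (2 * Real.pi * Complex.I * c))) * hI2
  rw [hval]
  -- w n = 2πIc/n  tends to 0 within {≠ 0}
  have hw0 : Tendsto (fun n : ℕ => (2 : ℂ) * Real.pi * Complex.I * c / n) atTop
      (nhdsWithin 0 {0}ᶜ) := by
    rw [tendsto_nhdsWithin_iff]
    constructor
    · have h1 : Tendsto (fun n : ℕ => ((n : ℂ))⁻¹) atTop (nhds 0) := by
        have := (tendsto_natCast_atTop_atTop (R := ℝ)).inv_tendsto_atTop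
        have h2 := (Complex.continuous_ofReal.tendsto 0).comp this
        refine h2.congr fun n => ?_
        simp
      have := h1.const_mul ((2 : ℂ) * Real.pi * Complex.I * c)
      simpa [div_eq_mul_inv] using this
    · filter_upwards [eventually_gt_atTop 0] with n hn
      have hn' : (n : ℂ) ≠ 0 := Nat.cast_ne_zero.mpr hn.ne'
      simp [div_eq_mul_inv, hK, hn']
  -- slope of exp at 0
  have hslope : Tendsto (fun z : ℂ => (Complex.exp z - 1) / z) (nhdsWithin 0 {0}ᶜ)
      (nhds 1) := by
    have h := (Complex.hasDerivAt_exp 0)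
    rw [hasDerivAt_iff_tendsto_slope, Complex.exp_zero] at h
    refine h.congr fun z => ?_
    rw [slope_def_field]
    simp
  have hden : Tendsto (fun n : ℕ => (n : ℂ) *
      (Complex.exp (2 * Real.pi * Complex.I * c / n) - 1)) atTop
      (nhds (2 * Real.pi * Complex.I * c)) := by
    have h := ((hslope.comp hw0).mul_const ((2 : ℂ) * Real.pi * Complex.I * c))
    rw [one_mul] at h
    apply h.congr'
    filter_upwards [eventually_gt_atTop 0] with n hn
    have hn' : (n : ℂ) ≠ 0 := Nat.cast_ne_zero.mpr hn.ne'
    simp only [Function.comp_apply]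
    field_simp
  have hmain : Tendsto (fun n : ℕ => (Complex.exp (2 * Real.pi * Complex.I * c) - 1) /
      ((n : ℂ) * (Complex.exp (2 * Real.pi * Complex.I * c / n) - 1))) atTop
      (nhds ((Complex.exp (2 * Real.pi * Complex.I * c) - 1) /
        (2 * Real.pi * Complex.I * c))) :=
    tendsto_const_nhds.div hden hK
  apply hmain.congr'
  filter_upwards [eventually_gt_atTop (Nat.ceil ‖c‖)] with n hn
  have hnc : ‖c‖ < (n : ℝ) := lt_of_le_of_lt (Nat.le_ceil _) (by exact_mod_cast hn)
  have hn0 : 0 < n := lt_of_le_of_lt (Nat.zero_le _) hn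
  have hn' : (n : ℂ) ≠ 0 := Nat.cast_ne_zero.mpr hn0.ne'
  set q : ℂ := Complex.exp (2 * Real.pi * Complex.I * c / n) with hq
  have hq1 : q ≠ 1 := by
    intro h
    rw [hq, Complex.exp_eq_one_iff] at h
    obtain ⟨m, hm⟩ := h
    have h2πI : (2 : ℂ) * Real.pi * Complex.I ≠ 0 := by simp [hπ, hI]
    have hcm : c = (m : ℂ) * n := by
      have h1 : c / n = (m : ℂ) := by
        apply mul_left_cancel₀ h2πI
        linear_combination hm
      rw [div_eq_iff hn'] at h1
      linear_combination h1
    rcases eq_or_ne m 0 with hm0 | hm0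
    · exact hc0 (by simp [hcm, hm0])
    · have : (n : ℝ) ≤ ‖c‖ := by
        rw [hcm]
        rw [norm_mul]
        have h1 : (1 : ℝ) ≤ ‖(m : ℂ)‖ := by
          have : (1 : ℝ) ≤ |(m : ℝ)| := by
            exact_mod_cast Int.one_le_abs hm0
          simpa [Complex.norm_intCast] using this
        have h2 : ‖((n : ℕ) : ℂ)‖ = (n : ℝ) := by simp
        nlinarith [norm_nonneg ((n : ℕ) : ℂ)]
      linarith
  -- summand identity
  have hsummand : ∀ k : ℕ,
      (Complex.exp (Complex.I * (θ + 2 * Real.pi * a / n))) ^ k *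
        ((starRingEnd ℂ) (Complex.exp (Complex.I * (θ + 2 * Real.pi * b / n)))) ^ k
      = q ^ k := by
    intro k
    rw [← mul_pow, ← Complex.exp_conj, ← Complex.exp_add, hq]
    congr 1
    simp only [map_mul, map_add, map_div₀, Complex.conj_I, Complex.conj_ofReal,
      map_ofNat, Complex.conj_natCast]
    rw [hcdef]
    ring
  simp only [hsummand]
  rw [geom_sum_eq hq1, hq, ← Complex.exp_nat_mul]
  rw [show (n : ℂ) * (2 * Real.pi * Complex.I * c / n) = 2 * Real.pi * Complex.I * c by
    field_simp]
  rw [div_div]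
  ring_nf
end

section
/- One-step perturbation formula: if two sequences of Verblunsky coefficients agree except that at a single index N the coefficients are v (for the perturbed sequence) versus 0 (unperturbed), then for every k > N the perturbed orthonormal polynomial satisfies φ'_k(z) = (1−|v|²)^{-1/2} (φ_k(z) − z^{k−N−1} conj(v) φ*_N(z)), where φ_k are the polynomials of the sequence that is zero at N and beyond, provided both sequences vanish for indices ≥ N. -/
open Complex

/-- One-step perturbation formula: if two sequences of Verblunsky coefficients
agree except that at a single index N the coefficients are v (perturbed) versus 0
(unperturbed), and both sequences vanish at indices ≥ N apart from that single change,
then for every k > N the perturbed orthonormal polynomial satisfies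
φ'_k(z) = (1−|v|²)^{-1/2} (φ_k(z) − z^{k−N−1} conj(v) φ*_N(z)). -/
theorem stmt_14
    (v : ℂ) (hv : ‖v‖ < 1)
    (α α' : ℕ → ℂ) (hα : ∀ k, ‖α k‖ < 1) (hα' : ∀ k, ‖α' k‖ < 1)
    (hzero : ∀ k, N ≤ k → α k = 0)
    (hN : α' N = v) (hzero' : ∀ k, N < k → α' k = 0)
    (hagree : ∀ k, k < N → α' k = α k)
    (φ φs φ' φs' : ℕ → ℂ → ℂ)
    (hφ0 : ∀ z, φ 0 z = 1) (hφs0 : ∀ z, φs 0 z = 1)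
    (hφ'0 : ∀ z, φ' 0 z = 1) (hφs'0 : ∀ z, φs' 0 z = 1)
    (hrec : ∀ k, ∀ z : ℂ, φ (k + 1) z =
      ((Real.sqrt (1 - ‖α k‖ ^ 2) : ℝ) : ℂ)⁻¹ *
        (z * φ k z - (starRingEnd ℂ) (α k) * φs k z))
    (hrecs : ∀ k, ∀ z : ℂ, φs (k + 1) z =
      ((Real.sqrt (1 - ‖α k‖ ^ 2) : ℝ) : ℂ)⁻¹ *
        (-(z * α k * φ k z) + φs k z))
    (hrec' : ∀ k, ∀ z : ℂ, φ' (k + 1) z =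
      ((Real.sqrt (1 - ‖α' k‖ ^ 2) : ℝ) : ℂ)⁻¹ *
        (z * φ' k z - (starRingEnd ℂ) (α' k) * φs' k z))
    (hrecs' : ∀ k, ∀ z : ℂ, φs' (k + 1) z =
      ((Real.sqrt (1 - ‖α' k‖ ^ 2) : ℝ) : ℂ)⁻¹ *
        (-(z * α' k * φ' k z) + φs' k z)) :
    ∀ k, N < k → ∀ z : ℂ,
      φ' k z = ((Real.sqrt (1 - ‖v‖ ^ 2) : ℝ) : ℂ)⁻¹ *
        (φ k z - z ^ (k - N - 1) * (starRingEnd ℂ) v * φs N z) := by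
  have heq : ∀ k, k ≤ N → (∀ z, φ' k z = φ k z) ∧ (∀ z, φs' k z = φs k z) := by
    intro k hk
    induction k with
    | zero => exact ⟨fun z => by rw [hφ'0, hφ0], fun z => by rw [hφs'0, hφs0]⟩
    | succ n ih =>
      have hn : n < N := hk
      obtain ⟨h1, h2⟩ := ih (le_of_lt hn)
      refine ⟨fun z => ?_, fun z => ?_⟩
      · rw [hrec', hrec, hagree n hn, h1, h2]
      · rw [hrecs', hrecs, hagree n hn, h1, h2]
  have hone : ((Real.sqrt (1 - ‖(0:ℂ)‖ ^ 2) : ℝ) : ℂ)⁻¹ = 1 := by norm_num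
  intro k hk
  have hk' : N + 1 ≤ k := hk
  induction k, hk' using Nat.le_induction with
  | base =>
    intro z
    obtain ⟨h1, h2⟩ := heq N le_rfl
    rw [hrec' N z, hN, h1, h2, hrec N z, hzero N le_rfl]
    simp only [hone, map_zero]
    ring_nf
    simp
  | succ k hk ih =>
    intro z
    have e1 : k - N - 1 + 1 = k - N := by omega
    have e2 : k + 1 - N - 1 = k - N := by omega
    rw [hrec' k z, hzero' k (by omega), hone, hrec k z, hzero k (by omega), hone,
      ih (by omega), e2]
    have pe : z ^ (k - N) = z ^ (k - N - 1) * z := by rw [← pow_succ, e1]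
    rw [pe]
    simp only [map_zero]
    ring
end

section
/- If μ_ac is the absolutely continuous part (with respect to arc-length) of an infinitely supported probability measure μ on ∂D, then for μ_ac-almost every Θ, limsup_{n→∞} n(θ_n^{(0)}(Θ) − θ_n^{(-1)}(Θ)) > 0, where θ_n^{(-1)} < Θ ≤ θ_n^{(0)} are the consecutive zeros of the paraorthogonal polynomials H_n^{(β_{n-1})} around Θ. -/
open Complex Polynomial MeasureTheory Filter
open scoped ENNReal

private lemma aux_exp_eq_exp {s t : ℝ}
    (h : Complex.exp (s * Complex.I) = Complex.exp (t * Complex.I)) :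
    ∃ k : ℤ, s = t + 2 * Real.pi * k := by
  rw [Complex.exp_eq_exp_iff_exists_int] at h
  obtain ⟨k, hk⟩ := h
  refine ⟨k, ?_⟩
  have hk' : (s : ℂ) * Complex.I = ((t : ℂ) + 2 * (Real.pi : ℂ) * k) * Complex.I := by
    rw [hk]; ring
  have h2 : (s : ℂ) = (t : ℂ) + 2 * (Real.pi : ℂ) * k :=
    mul_right_cancel₀ Complex.I_ne_zero hk'
  exact_mod_cast h2

private lemma aux_arg_exp {t : ℝ} {z : ℂ} (h : Complex.exp ((t : ℂ) * Complex.I) = z) :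
    ∃ k : ℤ, Complex.arg z = t + 2 * Real.pi * k := by
  have habs : ‖z‖ = 1 := by rw [← h]; exact Complex.norm_exp_ofReal_mul_I t
  have h1 : Complex.exp ((Complex.arg z : ℂ) * Complex.I) = z := by
    have := Complex.norm_mul_exp_arg_mul_I z
    rwa [habs, Complex.ofReal_one, one_mul] at this
  exact aux_exp_eq_exp (h1.trans h.symm)

private lemma aux_H_ne (φ : ℕ → Polynomial ℂ) (hdeg : ∀ k, (φ k).natDegree = k)
    (hlead : ∀ k, 0 < ((φ k).coeff k).re) (b : ℂ) (m : ℕ) :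
    (X * φ m - C b * ((φ m).map (starRingEnd ℂ)).reverse) ≠ 0 ∧
    (X * φ m - C b * ((φ m).map (starRingEnd ℂ)).reverse).natDegree ≤ m + 1 := by
  set q : Polynomial ℂ := ((φ m).map (starRingEnd ℂ)).reverse with hqdef
  have hq : q.natDegree ≤ m := by
    refine (Polynomial.reverse_natDegree_le _).trans ?_
    exact (Polynomial.natDegree_map_le).trans_eq (hdeg m)
  have hc : (X * φ m - C b * q).coeff (m + 1) = (φ m).coeff m := by
    rw [Polynomial.coeff_sub, Polynomial.coeff_X_mul, Polynomial.coeff_C_mul,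
      Polynomial.coeff_eq_zero_of_natDegree_lt (lt_of_le_of_lt hq (Nat.lt_succ_self m)),
      mul_zero, sub_zero]
  constructor
  · intro h0
    rw [h0, Polynomial.coeff_zero] at hc
    have := hlead m
    rw [← hc] at this
    simp at this
  · refine (Polynomial.natDegree_sub_le _ _).trans (max_le ?_ ?_)
    · refine (Polynomial.natDegree_mul_le).trans ?_
      rw [Polynomial.natDegree_X, hdeg m]; omega
    · refine (Polynomial.natDegree_mul_le).trans ?_
      rw [Polynomial.natDegree_C]; omega


/-- If μ_ac is the absolutely continuous part (w.r.t. arc-length) of an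
infinitely supported probability measure μ on ∂D, then for μ_ac-almost every point
e^{iΘ}, limsup_{n→∞} n(θ_n^{(0)}(Θ) − θ_n^{(-1)}(Θ)) > 0, where θ_n^{(-1)} < Θ ≤ θ_n^{(0)}
label the consecutive zeros of the paraorthogonal polynomials H_n^{(β_{n-1})} around Θ.
(The conclusion `limsup > 0` is expressed as: some c > 0 is exceeded frequently.) -/
theorem stmt_17
    (μ : Measure ℂ) [IsProbabilityMeasure μ]
    (hcirc : μ {z : ℂ | ‖z‖ = 1}ᶜ = 0)
    (hinf : ∀ s : Finset ℂ, μ ((↑s : Set ℂ)ᶜ) ≠ 0)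
    (φ : ℕ → Polynomial ℂ)
    (hdeg : ∀ k, (φ k).natDegree = k)
    (hlead : ∀ k, 0 < ((φ k).coeff k).re ∧ ((φ k).coeff k).im = 0)
    (horth : ∀ k m, ∫ z, (φ k).eval z * (starRingEnd ℂ) ((φ m).eval z) ∂μ =
      if k = m then 1 else 0)
    -- arc-length measure on the unit circle and the a.c. part of μ with respect to it
    (lamb : Measure ℂ)
    (hlamb : lamb = Measure.map (fun θ : ℝ => Complex.exp (θ * Complex.I))
      (MeasureTheory.volume.restrict (Set.Ico (0 : ℝ) (2 * Real.pi))))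
    (μac : Measure ℂ)
    (hμac : μac = lamb.withDensity (μ.rnDeriv lamb))
    -- an arbitrary sequence of paraorthogonal polynomials
    (β : ℕ → ℂ) (hβ : ∀ n, ‖β n‖ = 1)
    (H : ℕ → Polynomial ℂ)
    (hH : ∀ n, 1 ≤ n → H n = X * φ (n - 1) -
      C ((starRingEnd ℂ) (β (n - 1))) * ((φ (n - 1)).map (starRingEnd ℂ)).reverse)
    -- the consecutive zeros θ_n^{(-1)}(Θ) < Θ ≤ θ_n^{(0)}(Θ) of H_n around each Θ
    (θm θ0 : ℕ → ℝ → ℝ)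
    (horder : ∀ n, 1 ≤ n → ∀ Θ : ℝ, θm n Θ < Θ ∧ Θ ≤ θ0 n Θ)
    (hgap : ∀ n, 1 ≤ n → ∀ Θ : ℝ, θ0 n Θ - θm n Θ ≤ 2 * Real.pi)
    (hzm : ∀ n, 1 ≤ n → ∀ Θ : ℝ,
      (H n).eval (Complex.exp ((θm n Θ) * Complex.I)) = 0)
    (hz0 : ∀ n, 1 ≤ n → ∀ Θ : ℝ,
      (H n).eval (Complex.exp ((θ0 n Θ) * Complex.I)) = 0)
    (hconsec : ∀ n, 1 ≤ n → ∀ Θ : ℝ, ∀ t : ℝ, θm n Θ < t → t < θ0 n Θ →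
      (H n).eval (Complex.exp (t * Complex.I)) ≠ 0) :
    ∀ᵐ z ∂μac, ∀ Θ : ℝ, Complex.exp (Θ * Complex.I) = z →
      ∃ c > (0 : ℝ), ∃ᶠ n : ℕ in atTop, c < (n : ℝ) * (θ0 n Θ - θm n Θ) := by
  have twopi : (0:ℝ) < 2 * Real.pi := Real.two_pi_pos
  have hHfacts : ∀ n, 1 ≤ n → H n ≠ 0 ∧ (H n).natDegree ≤ n := by
    intro n hn
    obtain ⟨m, rfl⟩ : ∃ m, n = m + 1 := ⟨n - 1, by omega⟩
    have := aux_H_ne φ hdeg (fun k => (hlead k).1) ((starRingEnd ℂ) (β m)) m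
    rw [hH (m+1) hn]
    simpa using this
  set Bad : Set ℝ :=
    {Θ : ℝ | ¬ ∃ c > (0:ℝ), ∃ᶠ n : ℕ in atTop, c < (n : ℝ) * (θ0 n Θ - θm n Θ)} with hBadDef
  -- main covering estimate
  have key : ∀ c : ℝ, 0 < c → ∀ a : ℝ,
      volume (Bad ∩ Set.Ico a (a + 2*Real.pi)) ≤ ENNReal.ofReal (2*c) := by
    intro c hc a
    set n₀ : ℕ := ⌈c / (2*Real.pi)⌉₊ + 1 with hn₀def
    set t1 : ℂ → ℝ := fun r =>
      Complex.arg r + 2*Real.pi * ((⌈(a - Complex.arg r)/(2*Real.pi)⌉ : ℤ) : ℝ) with ht1def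
    set U : ℕ → Set ℝ := fun n => ⋃ r ∈ (H n).roots.toFinset,
      (Set.Ioc (t1 r - c/n) (t1 r) ∪ Set.Ioc (t1 r + 2*Real.pi - c/n) (t1 r + 2*Real.pi))
      with hUdef
    have hUmeas : ∀ n, MeasurableSet (U n) := by
      intro n
      exact Finset.measurableSet_biUnion _ fun r _ => measurableSet_Ioc.union measurableSet_Ioc
    have hUvol : ∀ n, 1 ≤ n → volume (U n) ≤ ENNReal.ofReal (2*c) := by
      intro n hn
      have hnpos : (0:ℝ) < n := by exact_mod_cast hn
      refine (measure_biUnion_finset_le _ _).trans ?_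
      have hone : ∀ r ∈ (H n).roots.toFinset,
          volume (Set.Ioc (t1 r - c/n) (t1 r) ∪
            Set.Ioc (t1 r + 2*Real.pi - c/n) (t1 r + 2*Real.pi))
          ≤ ENNReal.ofReal (2*(c/n)) := by
        intro r _
        refine (measure_union_le _ _).trans ?_
        have hd : (0:ℝ) ≤ c / n := div_nonneg hc.le (Nat.cast_nonneg n)
        rw [Real.volume_Ioc, Real.volume_Ioc, sub_sub_cancel, sub_sub_cancel,
          ← ENNReal.ofReal_add hd hd]
        exact ENNReal.ofReal_le_ofReal (le_of_eq (by ring))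
      refine (Finset.sum_le_sum hone).trans ?_
      rw [Finset.sum_const, nsmul_eq_mul]
      have hcard : (H n).roots.toFinset.card ≤ n := by
        refine (Multiset.toFinset_card_le _).trans ?_
        exact (Polynomial.card_roots' _).trans (hHfacts n hn).2
      calc ((H n).roots.toFinset.card : ℝ≥0∞) * ENNReal.ofReal (2*(c/n))
          ≤ (n : ℝ≥0∞) * ENNReal.ofReal (2*(c/n)) := by
            exact mul_le_mul_left (by exact_mod_cast hcard) _
        _ = ENNReal.ofReal ((n:ℝ) * (2*(c/n))) := by
            rw [← ENNReal.ofReal_natCast n, ← ENNReal.ofReal_mul (by positivity)]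
        _ = ENNReal.ofReal (2*c) := by
            congr 1
            field_simp
    -- covering property
    have hcover : ∀ n, n₀ ≤ n → ∀ Θ, Θ ∈ Set.Ico a (a + 2*Real.pi) →
        θ0 n Θ - θm n Θ ≤ c / n → Θ ∈ U n := by
      intro n hn Θ hΘW hgapΘ
      have hn1 : 1 ≤ n := le_trans (by omega) hn
      have hnpos : (0:ℝ) < n := by exact_mod_cast hn1
      have hcn : c / n ≤ 2*Real.pi := by
        have h1 : c / (2*Real.pi) ≤ (n₀:ℝ) := by
          have := Nat.le_ceil (c / (2*Real.pi))
          have h2 : ((⌈c / (2*Real.pi)⌉₊ : ℕ) : ℝ) ≤ (n₀:ℝ) := by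
            exact_mod_cast Nat.le_succ _
          linarith
        have h2 : (n₀:ℝ) ≤ n := by exact_mod_cast hn
        rw [div_le_iff₀ hnpos]
        rw [div_le_iff₀ twopi] at h1
        nlinarith
      obtain ⟨hΘa, hΘb⟩ := hΘW
      obtain ⟨hθmΘ, hΘθ0⟩ := horder n hn1 Θ
      set t := θ0 n Θ with htdef
      set r := Complex.exp ((t:ℂ) * Complex.I) with hrdef
      have hrmem : r ∈ (H n).roots.toFinset := by
        rw [Multiset.mem_toFinset, Polynomial.mem_roots ((hHfacts n hn1).1)]
        exact hz0 n hn1 Θ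
      obtain ⟨k, hk⟩ := aux_arg_exp (rfl : Complex.exp ((t:ℂ)*Complex.I) = r)
      have ht_eq : t = Complex.arg r + 2*Real.pi * ((-k : ℤ) : ℝ) := by push_cast; linarith
      set k₀ : ℤ := ⌈(a - Complex.arg r)/(2*Real.pi)⌉ with hk₀def
      have htlb : a ≤ t := le_trans hΘa hΘθ0
      have htub : t < a + 2*Real.pi + c/n := by
        have h1 : t - Θ ≤ c/n := by linarith
        linarith
      have hklb : k₀ ≤ -k := by
        rw [hk₀def, Int.ceil_le, div_le_iff₀ twopi]
        have h1 : Complex.arg r + 2*Real.pi * ((-k : ℤ) : ℝ) ≥ a := by rw [← ht_eq]; exact htlb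
        push_cast at h1 ⊢
        nlinarith
      have hkub : -k < k₀ + 2 := by
        have h1 : (a - Complex.arg r)/(2*Real.pi) ≤ (k₀:ℝ) := by
          rw [hk₀def]; exact_mod_cast Int.le_ceil _
        rw [div_le_iff₀ twopi] at h1
        have h3 : Complex.arg r + 2*Real.pi * ((-k:ℤ):ℝ) < a + 4*Real.pi := by
          rw [← ht_eq]; linarith
        have h2 : ((-k:ℤ):ℝ) < (k₀:ℝ) + 2 := by nlinarith
        exact_mod_cast h2
      have hΘmem : Θ ∈ Set.Ioc (t - c/n) t := ⟨by linarith, hΘθ0⟩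
      refine Set.mem_biUnion hrmem ?_
      have ht1r : t1 r = Complex.arg r + 2*Real.pi * ((k₀:ℤ):ℝ) := by rw [ht1def]
      rcases (by omega : -k = k₀ ∨ -k = k₀ + 1) with h | h
      · left
        have heq : t1 r = t := by rw [ht1r, ht_eq, h]
        rw [heq]
        exact hΘmem
      · right
        have heq : t1 r + 2*Real.pi = t := by
          rw [ht1r, ht_eq, h]
          push_cast
          ring
        rw [heq]
        exact hΘmem
    -- assemble within the window
    set A : ℕ → Set ℝ := fun N => ⋂ j : ℕ, U (n₀ + N + j) with hAdef
    have hAmono : Monotone A := by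
      intro N N' hNN' Θ hΘ
      simp only [hAdef, Set.mem_iInter] at hΘ ⊢
      intro j
      have h1 := hΘ ((N' - N) + j)
      have heq : n₀ + N + ((N' - N) + j) = n₀ + N' + j := by omega
      rwa [heq] at h1
    have hsub : Bad ∩ Set.Ico a (a + 2*Real.pi) ⊆ ⋃ N, A N := by
      rintro Θ ⟨hΘbad, hΘW⟩
      rw [hBadDef, Set.mem_setOf_eq] at hΘbad
      push_neg at hΘbad
      have hfreq := hΘbad c hc
      rw [Filter.eventually_atTop] at hfreq
      obtain ⟨N, hN⟩ := hfreq
      refine Set.mem_iUnion.mpr ⟨N, ?_⟩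
      simp only [hAdef, Set.mem_iInter]
      intro j
      have hge : N ≤ n₀ + N + j := by omega
      have hnpos : (0:ℝ) < (n₀ + N + j : ℕ) := by
        have : 1 ≤ n₀ + N + j := by omega
        exact_mod_cast this
      refine hcover (n₀ + N + j) (by omega) Θ hΘW ?_
      rw [le_div_iff₀ hnpos]
      have := hN (n₀ + N + j) hge
      linarith [this]
    calc volume (Bad ∩ Set.Ico a (a + 2*Real.pi))
        ≤ volume (⋃ N, A N) := measure_mono hsub
      _ = ⨆ N, volume (A N) := Directed.measure_iUnion (hAmono.directed_le)
      _ ≤ ENNReal.ofReal (2*c) := by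
          refine iSup_le fun N => ?_
          refine (measure_mono (Set.iInter_subset _ 0)).trans (hUvol (n₀ + N + 0) (by omega))
  -- each window is null
  have hwin : ∀ a : ℝ, volume (Bad ∩ Set.Ico a (a + 2*Real.pi)) = 0 := by
    intro a
    refine le_antisymm ?_ zero_le
    have htend : Tendsto (fun j : ℕ => ENNReal.ofReal (2 * (1/(j+1)))) atTop (nhds 0) := by
      have h1 : Tendsto (fun j : ℕ => 2 * (1/((j:ℝ)+1))) atTop (nhds 0) := by
        have := tendsto_one_div_add_atTop_nhds_zero_nat (𝕜 := ℝ)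
        have h2 := this.const_mul (2:ℝ)
        simpa using h2
      have := (ENNReal.continuous_ofReal.tendsto 0).comp h1
      rw [ENNReal.ofReal_zero] at this; exact this
    refine ge_of_tendsto' htend fun j => ?_
    exact key (1/(j+1)) (by positivity) a
  have hBadNull : volume Bad = 0 := by
    have hsub : Bad ⊆ ⋃ k : ℤ, (Bad ∩ Set.Ico (2*Real.pi*k) (2*Real.pi*k + 2*Real.pi)) := by
      intro Θ hΘ
      refine Set.mem_iUnion.mpr ⟨⌊Θ/(2*Real.pi)⌋, hΘ, ?_, ?_⟩
      · have h1 : (⌊Θ/(2*Real.pi)⌋ : ℝ) ≤ Θ/(2*Real.pi) := Int.floor_le _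
        rw [le_div_iff₀ twopi] at h1
        linarith
      · have h1 : Θ/(2*Real.pi) < (⌊Θ/(2*Real.pi)⌋ : ℝ) + 1 := Int.lt_floor_add_one _
        rw [div_lt_iff₀ twopi] at h1
        linarith
    exact measure_mono_null hsub (measure_iUnion_null fun k => hwin _)
  -- transfer to the circle
  set M : Set ℝ := toMeasurable volume Bad with hMdef
  have hBM : Bad ⊆ M := subset_toMeasurable _ _
  have hMm : MeasurableSet M := measurableSet_toMeasurable _ _
  have hMn : volume M = 0 := by rw [hMdef, measure_toMeasurable]; exact hBadNull
  set Nset : Set ℝ := ⋃ k : ℤ, (fun Θ : ℝ => Θ + 2*Real.pi*k) ⁻¹' M with hNdef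
  have hNmem : ∀ Θ : ℝ, Θ ∈ Nset ↔ ∃ k : ℤ, Θ + 2*Real.pi*k ∈ M := by
    intro Θ
    simp [hNdef, Set.mem_iUnion]
  have hNm : MeasurableSet Nset :=
    MeasurableSet.iUnion fun k => hMm.preimage (measurable_add_const _)
  have hNn : volume Nset = 0 := by
    refine measure_iUnion_null fun k => ?_
    rw [measure_preimage_add_right]
    exact hMn
  set T : Set ℂ := Complex.arg ⁻¹' Nset with hTdef
  have hTm : MeasurableSet T := Complex.measurable_arg hNm
  have hemeas : Measurable (fun θ : ℝ => Complex.exp ((θ:ℂ) * Complex.I)) := by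
    fun_prop
  have hTnull : lamb T = 0 := by
    rw [hlamb, Measure.map_apply hemeas hTm]
    rw [Measure.restrict_apply (hemeas hTm)]
    refine measure_mono_null ?_ hNn
    refine Set.inter_subset_left.trans ?_
    intro Θ hΘ
    simp only [Set.mem_preimage, hTdef] at hΘ
    obtain ⟨k, hk⟩ := aux_arg_exp (rfl : Complex.exp ((Θ:ℂ)*Complex.I) = _)
    rw [hNmem] at hΘ ⊢
    obtain ⟨k2, hk2⟩ := hΘ
    refine ⟨k + k2, ?_⟩
    have heq : Θ + 2*Real.pi*((k + k2 : ℤ):ℝ)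
        = Complex.arg (Complex.exp ((Θ:ℂ)*Complex.I)) + 2*Real.pi*(k2:ℝ) := by
      push_cast
      rw [hk]
      ring
    rw [heq]
    exact hk2
  -- conclude
  have hac : μac ≪ lamb := by rw [hμac]; exact withDensity_absolutelyContinuous _ _
  refine hac.ae_le (Filter.eventually_iff.mpr ?_)
  rw [MeasureTheory.mem_ae_iff]
  refine measure_mono_null ?_ hTnull
  intro z hz
  simp only [Set.mem_compl_iff, Set.mem_setOf_eq] at hz
  push_neg at hz
  obtain ⟨Θ, hΘz, hΘbad⟩ := hz
  have hΘBad : Θ ∈ Bad := by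
    rw [hBadDef, Set.mem_setOf_eq]
    push_neg
    intro c hc
    have := hΘbad c hc
    simpa using this
  obtain ⟨k, hk⟩ := aux_arg_exp hΘz
  simp only [hTdef, Set.mem_preimage]
  rw [hNmem]
  refine ⟨-k, ?_⟩
  have heq : Complex.arg z + 2*Real.pi*((-k : ℤ):ℝ) = Θ := by
    push_cast
    rw [hk]
    ring
  rw [heq]
  exact hBM hΘBad
end
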